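/- arXiv:2406.06354 — 7 statements merged into one kernel-verified Lean document; each statement's English description precedes it below -/
import Mathlib

section
/- Fix integers d ≥ 1 and p ≥ 1 and let σ satisfy Assumption A. Then there exist c > 0 and ε₀ > 0 such that for every ε ∈ (0, ε₀), the matrix Φ(ε) is invertible and Φ(ε)^{−1} − c D_ε is positive semidefinite, where D_ε is the diagonal matrix indexed by ℕ^d_{≤p} with diagonal entries (D_ε)_{T,T} = ε^{−|T|}. -/
open MeasureTheory ProbabilityTheory Real Finset Filter Polynomial

noncomputable section

/-- standard gaussian -/
local notation "γ" => gaussianReal 0 1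

lemma gpdf_eq (x : ℝ) : gaussianPDFReal 0 1 x = (√(2 * π))⁻¹ * rexp (-(x^2/2)) := by
  rw [gaussianPDFReal_def]
  norm_num
  left
  ring

lemma abs_le_sq (x : ℝ) : |x| ≤ 1 + x^2/4 := by
  nlinarith [sq_nonneg (|x| - 2), abs_nonneg x, sq_abs x]

lemma pow_le_exp_aux (x : ℝ) (n : ℕ) : |x|^n ≤ n.factorial * rexp (1 + x^2/4) := by
  have h1 : |x|^n / n.factorial ≤ rexp |x| := Real.pow_div_factorial_le_exp _ (abs_nonneg x) n
  have h2 : rexp |x| ≤ rexp (1 + x^2/4) := Real.exp_le_exp.mpr (abs_le_sq x)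
  have h3 : (0:ℝ) < n.factorial := by positivity
  calc |x|^n = n.factorial * (|x|^n / n.factorial) := by field_simp
  _ ≤ n.factorial * rexp (1 + x^2/4) := by
      exact mul_le_mul_of_nonneg_left (h1.trans h2) (le_of_lt h3)

lemma integrable_pow_gauss (n : ℕ) :
    Integrable (fun x : ℝ => x ^ n * rexp (-(x^2/2))) := by
  have hbase : Integrable (fun x : ℝ => (n.factorial * rexp 1) * rexp (-(1/4) * x^2)) :=
    (integrable_exp_neg_mul_sq (by norm_num : (0:ℝ) < 1/4)).const_mul _
  refine hbase.mono' ?_ ?_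
  · exact ((continuous_pow n).mul (Real.continuous_exp.comp (by continuity))).aestronglyMeasurable
  · refine Filter.Eventually.of_forall fun x => ?_
    have h := pow_le_exp_aux x n
    have hx : ‖x ^ n * rexp (-(x^2/2))‖ = |x|^n * rexp (-(x^2/2)) := by
      rw [norm_mul, norm_pow, Real.norm_eq_abs, Real.norm_eq_abs,
        abs_of_pos (Real.exp_pos _)]
    rw [hx]
    have : |x|^n * rexp (-(x^2/2)) ≤ (n.factorial * rexp (1 + x^2/4)) * rexp (-(x^2/2)) :=
      mul_le_mul_of_nonneg_right h (le_of_lt (Real.exp_pos _))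
    refine this.trans (le_of_eq ?_)
    rw [mul_assoc, ← Real.exp_add]
    rw [show (1 + x^2/4 + -(x^2/2)) = 1 + (-(1/4) * x^2) by ring, Real.exp_add, ← mul_assoc]

lemma integrable_poly_gaussV (P : Polynomial ℝ) :
    Integrable (fun x : ℝ => P.eval x * rexp (-(x^2/2))) := by
  have : (fun x : ℝ => P.eval x * rexp (-(x^2/2)))
      = fun x => ∑ i ∈ range (P.natDegree + 1), P.coeff i * (x ^ i * rexp (-(x^2/2))) := by
    funext x
    rw [Polynomial.eval_eq_sum_range (p := P) x, Finset.sum_mul]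
    simp [mul_assoc]
  rw [this]
  exact integrable_finset_sum _ fun i _ => (integrable_pow_gauss i).const_mul _

lemma gauss_withDensity :
    γ = volume.withDensity (fun x => ((gaussianPDFReal 0 1 x).toNNReal : ENNReal)) := by
  rw [gaussianReal_of_var_ne_zero 0 one_ne_zero]
  rfl

lemma integral_gauss_eq (f : ℝ → ℝ) :
    ∫ x, f x ∂γ = ∫ x, f x * gaussianPDFReal 0 1 x := by
  rw [gauss_withDensity, integral_withDensity_eq_integral_smul
    (measurable_gaussianPDFReal 0 1).real_toNNReal f]
  congr 1
  funext x
  rw [NNReal.smul_def, smul_eq_mul, Real.coe_toNNReal _ (gaussianPDFReal_nonneg 0 1 x), mul_comm]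

lemma integrable_gauss_iff (f : ℝ → ℝ) :
    Integrable f γ ↔ Integrable (fun x => f x * gaussianPDFReal 0 1 x) := by
  rw [gauss_withDensity]
  rw [integrable_withDensity_iff (measurable_gaussianPDFReal 0 1).real_toNNReal.coe_nnreal_ennreal (Filter.Eventually.of_forall fun x => ENNReal.coe_lt_top)]
  constructor <;> intro h <;> [skip; skip] <;>
    · refine h.congr (Filter.Eventually.of_forall fun x => ?_)
      simp [Real.coe_toNNReal _ (gaussianPDFReal_nonneg 0 1 x)]

lemma integrable_poly_gauss (P : Polynomial ℝ) :
    Integrable (fun x : ℝ => P.eval x) γ := by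
  rw [integrable_gauss_iff]
  refine (integrable_poly_gaussV P).const_mul ((√(2 * π))⁻¹) |>.congr
    (Filter.Eventually.of_forall fun x => ?_)
  simp only [gpdf_eq]
  ring

/-- Gaussian integration by parts for polynomials -/
lemma gauss_ibp (P : Polynomial ℝ) :
    ∫ x, x * P.eval x ∂γ = ∫ x, (Polynomial.derivative P).eval x ∂γ := by
  rw [integral_gauss_eq, integral_gauss_eq]
  have key : ∫ (x:ℝ), P.eval x * (x * rexp (-(x^2/2)))
      = - ∫ (x:ℝ), (Polynomial.derivative P).eval x * (-(rexp (-(x^2/2)))) := by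
    refine integral_mul_deriv_eq_deriv_mul_of_integrable
      (u := fun x => P.eval x) (u' := fun x => (Polynomial.derivative P).eval x)
      (v := fun x => -(rexp (-(x^2/2)))) (v' := fun x => x * rexp (-(x^2/2)))
      (fun x _ => P.hasDerivAt x) (fun x _ => ?_) ?_ ?_ ?_
    · have h1 : HasDerivAt (fun y : ℝ => -(y^2/2)) (-x) x := by
        simpa using ((hasDerivAt_pow 2 x).div_const 2).fun_neg
      have h2 := (h1.exp)
      simpa [mul_comm] using h2.fun_neg
    · have := integrable_poly_gaussV (Polynomial.X * P)
      refine this.congr (Filter.Eventually.of_forall fun x => ?_)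
      simp only [Pi.mul_apply, Polynomial.eval_mul, Polynomial.eval_X]
      ring
    · have := (integrable_poly_gaussV (Polynomial.derivative P)).neg
      refine this.congr (Filter.Eventually.of_forall fun x => ?_)
      simp [Pi.mul_apply]
    · have := (integrable_poly_gaussV P).neg
      refine this.congr (Filter.Eventually.of_forall fun x => ?_)
      simp [Pi.mul_apply]
  have e1 : ∀ x : ℝ, x * P.eval x * gaussianPDFReal 0 1 x
      = (√(2 * π))⁻¹ * (P.eval x * (x * rexp (-(x^2/2)))) := by
    intro x; rw [gpdf_eq]; ring
  have e2 : ∀ x : ℝ, (Polynomial.derivative P).eval x * gaussianPDFReal 0 1 x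
      = (√(2 * π))⁻¹ * -((Polynomial.derivative P).eval x * (-(rexp (-(x^2/2))))) := by
    intro x; rw [gpdf_eq]; ring
  simp_rw [e1, e2]
  rw [MeasureTheory.integral_const_mul, MeasureTheory.integral_const_mul, key, MeasureTheory.integral_neg]

-- Section 2 : Hermite moment integrals

/-- real Hermite polynomial -/
def HR (t : ℕ) : Polynomial ℝ := (Polynomial.hermite t).map (Int.castRingHom ℝ)

lemma HR_zero : HR 0 = 1 := by
  simp [HR, Polynomial.hermite_zero]

lemma HR_succ (t : ℕ) : HR (t+1) = Polynomial.X * HR t - Polynomial.derivative (HR t) := by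
  unfold HR
  rw [Polynomial.hermite_succ, Polynomial.map_sub, Polynomial.map_mul, Polynomial.map_X, Polynomial.derivative_map]

/-- the unnormalized Hermite moment -/
def MI (a t : ℕ) : ℝ := ∫ y, y ^ a * (HR t).eval y ∂(gaussianReal 0 1)

lemma integrable_pow_mul_poly (a : ℕ) (Q : Polynomial ℝ) :
    Integrable (fun y : ℝ => y ^ a * Q.eval y) (gaussianReal 0 1) := by
  refine (integrable_poly_gauss (Polynomial.X ^ a * Q)).congr
    (Filter.Eventually.of_forall fun y => ?_)
  simp

lemma MI_rec (a t : ℕ) : MI a (t+1) = a * MI (a-1) t := by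
  have ibp := gauss_ibp (Polynomial.X ^ a * HR t)
  have dEq : Polynomial.derivative (Polynomial.X ^ a * HR t)
      = Polynomial.C (a:ℝ) * (Polynomial.X ^ (a-1) * HR t)
        + Polynomial.X ^ a * Polynomial.derivative (HR t) := by
    rw [Polynomial.derivative_mul, Polynomial.derivative_X_pow]
    ring
  have lhs : ∫ y, y * (Polynomial.X ^ a * HR t).eval y ∂(gaussianReal 0 1)
      = ∫ y, y ^ (a+1) * (HR t).eval y ∂(gaussianReal 0 1) := by
    congr 1; funext y; simp; ring
  have rhs : ∫ y, (Polynomial.derivative (Polynomial.X ^ a * HR t)).eval y ∂(gaussianReal 0 1)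
      = a * MI (a-1) t + ∫ y, y ^ a * (Polynomial.derivative (HR t)).eval y ∂(gaussianReal 0 1) := by
    rw [show (fun y => (Polynomial.derivative (Polynomial.X ^ a * HR t)).eval y)
        = fun y => (a:ℝ) * (y ^ (a-1) * (HR t).eval y) + y ^ a * (Polynomial.derivative (HR t)).eval y by
      funext y; rw [dEq]; simp]
    rw [integral_add (((integrable_pow_mul_poly (a-1) (HR t)).const_mul _))
      (integrable_pow_mul_poly a (Polynomial.derivative (HR t)))]
    rw [MeasureTheory.integral_const_mul]
    rfl
  have expand : MI a (t+1)
      = (∫ y, y ^ (a+1) * (HR t).eval y ∂(gaussianReal 0 1))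
        - ∫ y, y ^ a * (Polynomial.derivative (HR t)).eval y ∂(gaussianReal 0 1) := by
    unfold MI
    rw [show (fun y => y ^ a * (HR (t+1)).eval y)
        = fun y => y ^ (a+1) * (HR t).eval y - y ^ a * (Polynomial.derivative (HR t)).eval y by
      funext y; rw [HR_succ]; simp; ring]
    exact integral_sub (integrable_pow_mul_poly (a+1) (HR t))
      (integrable_pow_mul_poly a (Polynomial.derivative (HR t)))
  rw [expand, ← lhs, ibp, rhs]
  ring

lemma MI_zero_zero : MI 0 0 = 1 := by
  unfold MI
  rw [HR_zero]
  simp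

lemma MI_lt {a t : ℕ} (h : a < t) : MI a t = 0 := by
  induction t generalizing a with
  | zero => omega
  | succ t ih =>
      rw [MI_rec]
      rcases Nat.eq_zero_or_pos a with h0 | h0
      · simp [h0]
      · rw [ih (by omega)]
        ring

lemma MI_diag (t : ℕ) : MI t t = t.factorial := by
  induction t with
  | zero => simpa using MI_zero_zero
  | succ t ih =>
      rw [MI_rec]
      simp only [Nat.add_sub_cancel, ih, Nat.factorial_succ]
      push_cast
      ring


-- Pinned definitions from the problem statement

/-- The standard Gaussian measure `N(0, I_d)` on `ℝ^d`. -/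
noncomputable def gaussD (d : ℕ) : Measure (Fin d → ℝ) :=
  Measure.pi fun _ => gaussianReal 0 1

/-- The normalized (probabilists') Hermite polynomial `H_t = He_t / √(t!)` evaluated at `y`. -/
noncomputable def hermN (t : ℕ) (y : ℝ) : ℝ :=
  (Polynomial.aeval y (Polynomial.hermite t)) / Real.sqrt (Nat.factorial t)

/-- The multivariate Hermite polynomial `χ_T(x) = ∏ i, H_{T i}(x i)`. -/
noncomputable def chiH {d : ℕ} (T : Fin d → ℕ) (x : Fin d → ℝ) : ℝ :=
  ∏ i, hermN (T i) (x i)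

/-- The Hermite coefficient `φ̂_{w,b}(T) = ∫ σ(⟨w,x⟩ + b) χ_T(x) dγ_d(x)`
of the random feature `φ_{w,b}(x) = σ(⟨w,x⟩ + b)`. -/
noncomputable def phiHat (d : ℕ) (σ : ℝ → ℝ) (w : Fin d → ℝ) (b : ℝ)
    (T : Fin d → ℕ) : ℝ :=
  ∫ x, σ (∑ i, w i * x i + b) * chiH T x ∂(gaussD d)

/-- The law of a feature pair `(w, b)` with `w ∼ N(0, v I_d)` and `b ∼ N(0, v)` independent. -/
noncomputable def featMeas (d : ℕ) (v : NNReal) : Measure ((Fin d → ℝ) × ℝ) :=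
  (Measure.pi fun _ : Fin d => gaussianReal 0 v).prod (gaussianReal 0 v)

/-- The index set `ℕ^d_{≤p}` of multi-indices of total degree at most `p`
(each coordinate then being at most `p`, so we may record it in `Fin (p+1)`). -/
abbrev MIdx (d p : ℕ) := {T : Fin d → Fin (p + 1) // (∑ i, (T i : ℕ)) ≤ p}

/-- The multi-index in `ℕ^d` corresponding to an element of `MIdx d p`. -/
def MIdx.toFun {d p : ℕ} (T : MIdx d p) : Fin d → ℕ := fun i => (T.1 i : ℕ)

/-- The matrix `Φ(ε)` with entries `Φ(ε)_{T,T'} = E_{w,b}[φ̂_{w,b}(T) φ̂_{w,b}(T')]`,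
where `w ∼ N(0, ε I_d)` and `b ∼ N(0, ε)` are independent. -/
noncomputable def PhiMat (d p : ℕ) (σ : ℝ → ℝ) (ε : ℝ) :
    Matrix (MIdx d p) (MIdx d p) ℝ := fun T T' =>
  ∫ wb : (Fin d → ℝ) × ℝ,
    phiHat d σ wb.1 wb.2 T.toFun * phiHat d σ wb.1 wb.2 T'.toFun
      ∂(featMeas d ε.toNNReal)

-- Section 3 : multivariate expansions

lemma hermN_eq (t : ℕ) (y : ℝ) : hermN t y = (HR t).eval y / Real.sqrt (t.factorial) := by
  unfold hermN HR
  congr 1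
  rw [Polynomial.aeval_def, Polynomial.eval₂_eq_eval_map]
  norm_num

lemma integrable_pow_gamma (n : ℕ) : Integrable (fun y : ℝ => y ^ n) γ := by
  refine (integrable_pow_mul_poly n 1).congr (Filter.Eventually.of_forall fun y => ?_)
  simp

lemma integrable_pow_hermN (a t : ℕ) :
    Integrable (fun y : ℝ => y ^ a * hermN t y) γ := by
  refine ((integrable_pow_mul_poly a (HR t)).div_const (Real.sqrt (t.factorial))).congr
    (Filter.Eventually.of_forall fun y => ?_)
  simp only [hermN_eq]
  ring

lemma integral_pow_hermN (a t : ℕ) :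
    ∫ y, y ^ a * hermN t y ∂γ = MI a t / Real.sqrt (t.factorial) := by
  unfold MI
  rw [← MeasureTheory.integral_div]
  congr 1; funext y; rw [hermN_eq]; ring

lemma integral_pi_gauss {d : ℕ} (v : NNReal) (f : Fin d → ℝ → ℝ) :
    ∫ x, ∏ i, f i (x i) ∂(Measure.pi fun _ : Fin d => gaussianReal 0 v)
      = ∏ i, ∫ y, f i y ∂(gaussianReal 0 v) := by
  letI : MeasureSpace ℝ := ⟨gaussianReal 0 v⟩
  haveI : SigmaFinite (volume : Measure ℝ) := by
    change SigmaFinite (gaussianReal 0 v); infer_instance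
  exact MeasureTheory.integral_fintype_prod_eq_prod f

lemma integrable_pi_gauss {d : ℕ} (v : NNReal) (f : Fin d → ℝ → ℝ)
    (hf : ∀ i, Integrable (f i) (gaussianReal 0 v)) :
    Integrable (fun x : Fin d → ℝ => ∏ i, f i (x i))
      (Measure.pi fun _ : Fin d => gaussianReal 0 v) := by
  letI : MeasureSpace ℝ := ⟨gaussianReal 0 v⟩
  haveI : SigmaFinite (volume : Measure ℝ) := by
    change SigmaFinite (gaussianReal 0 v); infer_instance
  exact MeasureTheory.Integrable.fintype_prod hf

/-- the inner polynomial `J` function -/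
noncomputable def Jf (d : ℕ) (k : ℕ) (T : Fin d → ℕ) (w : Fin d → ℝ) (b : ℝ) : ℝ :=
  ∫ x, (∑ i, w i * x i + b) ^ k * chiH T x ∂(gaussD d)

/-- inner expansion coefficients -/
noncomputable def cIn {d : ℕ} (T : Fin d → ℕ) (k j : ℕ) (a : Fin d → ℕ) : ℝ :=
  (k.choose j : ℝ) * (Nat.multinomial Finset.univ a : ℝ)
    * ∏ i, (MI (a i) (T i) / Real.sqrt ((T i).factorial))

lemma inner_alg {d : ℕ} (T : Fin d → ℕ) (k : ℕ) (w : Fin d → ℝ) (b : ℝ) (x : Fin d → ℝ) :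
    (∑ i, w i * x i + b) ^ k * chiH T x
      = ∑ j ∈ Finset.range (k+1), ∑ a ∈ Finset.piAntidiag Finset.univ j,
          ((k.choose j : ℝ) * (Nat.multinomial Finset.univ a : ℝ) * b ^ (k-j)
            * ∏ i, w i ^ a i)
          * ∏ i, (x i ^ a i * hermN (T i) (x i)) := by
  rw [add_pow]
  rw [Finset.sum_mul]
  refine Finset.sum_congr rfl fun j hj => ?_
  rw [Finset.sum_pow_eq_sum_piAntidiag]
  rw [Finset.sum_mul, Finset.sum_mul, Finset.sum_mul]
  refine Finset.sum_congr rfl fun a ha => ?_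
  unfold chiH
  simp_rw [mul_pow]
  rw [Finset.prod_mul_distrib, Finset.prod_mul_distrib]
  ring

lemma integrable_inner_term {d : ℕ} (T a : Fin d → ℕ) (c : ℝ) :
    Integrable (fun x : Fin d → ℝ => c * ∏ i, (x i ^ a i * hermN (T i) (x i))) (gaussD d) := by
  exact (integrable_pi_gauss 1 (fun i y => y ^ a i * hermN (T i) y)
    (fun i => integrable_pow_hermN (a i) (T i))).const_mul c

lemma integrable_inner {d : ℕ} (T : Fin d → ℕ) (k : ℕ) (w : Fin d → ℝ) (b : ℝ) :
    Integrable (fun x : Fin d → ℝ => (∑ i, w i * x i + b) ^ k * chiH T x) (gaussD d) := by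
  rw [show (fun x : Fin d → ℝ => (∑ i, w i * x i + b) ^ k * chiH T x)
      = fun x => ∑ j ∈ Finset.range (k+1), ∑ a ∈ Finset.piAntidiag Finset.univ j,
          ((k.choose j : ℝ) * (Nat.multinomial Finset.univ a : ℝ) * b ^ (k-j)
            * ∏ i, w i ^ a i)
          * ∏ i, (x i ^ a i * hermN (T i) (x i)) from funext fun x => inner_alg T k w b x]
  exact integrable_finset_sum _ fun j _ => integrable_finset_sum _ fun a _ =>
    integrable_inner_term T a _

lemma J_expand {d : ℕ} (T : Fin d → ℕ) (k : ℕ) (w : Fin d → ℝ) (b : ℝ) :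
    Jf d k T w b = ∑ j ∈ Finset.range (k+1), ∑ a ∈ Finset.piAntidiag Finset.univ j,
      cIn T k j a * (b ^ (k-j) * ∏ i, w i ^ a i) := by
  unfold Jf
  rw [show (fun x : Fin d → ℝ => (∑ i, w i * x i + b) ^ k * chiH T x)
      = fun x => ∑ j ∈ Finset.range (k+1), ∑ a ∈ Finset.piAntidiag Finset.univ j,
          ((k.choose j : ℝ) * (Nat.multinomial Finset.univ a : ℝ) * b ^ (k-j)
            * ∏ i, w i ^ a i)
          * ∏ i, (x i ^ a i * hermN (T i) (x i)) from funext fun x => inner_alg T k w b x]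
  rw [MeasureTheory.integral_finset_sum _ fun j _ => integrable_finset_sum _ fun a _ =>
    integrable_inner_term T a _]
  refine Finset.sum_congr rfl fun j hj => ?_
  rw [MeasureTheory.integral_finset_sum _ fun a _ => integrable_inner_term T a _]
  refine Finset.sum_congr rfl fun a ha => ?_
  rw [MeasureTheory.integral_const_mul]
  have : ∫ x, ∏ i, (x i ^ a i * hermN (T i) (x i)) ∂(gaussD d)
      = ∏ i, (MI (a i) (T i) / Real.sqrt ((T i).factorial)) := by
    rw [show (gaussD d) = Measure.pi fun _ : Fin d => gaussianReal 0 1 from rfl]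
    rw [integral_pi_gauss 1 (fun i y => y ^ a i * hermN (T i) y)]
    exact Finset.prod_congr rfl fun i _ => integral_pow_hermN (a i) (T i)
  rw [this]
  unfold cIn
  ring


lemma cIn_vanish {d : ℕ} {T a : Fin d → ℕ} (h : ∑ i, a i < ∑ i, T i) (k j : ℕ) :
    cIn T k j a = 0 := by
  have hex : ∃ i, a i < T i := by
    by_contra h'
    push_neg at h'
    exact absurd (Finset.sum_le_sum fun i _ => h' i) (not_le.mpr h)
  obtain ⟨i, hi⟩ := hex
  unfold cIn
  rw [Finset.prod_eq_zero (Finset.mem_univ i) (by rw [MI_lt hi]; simp)]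
  ring

lemma Jf_vanish {d : ℕ} {T : Fin d → ℕ} {k : ℕ} (hk : k < ∑ i, T i)
    (w : Fin d → ℝ) (b : ℝ) : Jf d k T w b = 0 := by
  rw [J_expand]
  refine Finset.sum_eq_zero fun j hj => Finset.sum_eq_zero fun a ha => ?_
  rw [Finset.mem_piAntidiag] at ha
  rw [cIn_vanish (by rw [ha.1]; exact lt_of_le_of_lt (Nat.lt_succ_iff.mp (Finset.mem_range.mp hj)) hk) k j, zero_mul]

/-- the leading coefficient -/
noncomputable def AT {d : ℕ} (T : Fin d → ℕ) : ℝ :=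
  (Nat.multinomial Finset.univ T : ℝ)
    * ∏ i, (((T i).factorial : ℝ) / Real.sqrt ((T i).factorial))

lemma AT_pos {d : ℕ} (T : Fin d → ℕ) : 0 < AT T := by
  refine mul_pos (by exact_mod_cast Nat.multinomial_pos _ _) (Finset.prod_pos fun i _ => ?_)
  have h1 : (0:ℝ) < ((T i).factorial : ℝ) := by exact_mod_cast (T i).factorial_pos
  positivity

lemma Jf_diag {d : ℕ} (T : Fin d → ℕ) (w : Fin d → ℝ) (b : ℝ) :
    Jf d (∑ i, T i) T w b = AT T * ∏ i, w i ^ T i := by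
  rw [J_expand]
  rw [Finset.sum_eq_single_of_mem (∑ i, T i) (Finset.self_mem_range_succ _) ?side1]
  · rw [Finset.sum_eq_single_of_mem T ?mem ?side2]
    · have h1 : ∀ i, MI (T i) (T i) / Real.sqrt ((T i).factorial)
          = ((T i).factorial : ℝ) / Real.sqrt ((T i).factorial) := fun i => by rw [MI_diag]
      unfold cIn AT
      rw [Nat.choose_self, Nat.sub_self, pow_zero]
      simp only [h1]
      push_cast
      ring
    case mem =>
      rw [Finset.mem_piAntidiag]
      exact ⟨rfl, fun i _ => Finset.mem_univ i⟩
    case side2 =>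
      intro a ha hne
      rw [Finset.mem_piAntidiag] at ha
      have hex : ∃ i, a i < T i := by
        by_contra h'
        push_neg at h'
        refine hne (funext fun i => le_antisymm ?_ (h' i))
        by_contra hgt
        push_neg at hgt
        have hlt : ∑ i, T i < ∑ i, a i :=
          Finset.sum_lt_sum (fun i _ => h' i) ⟨i, Finset.mem_univ i, hgt⟩
        have ha1 : ∑ i, a i = ∑ i, T i := ha.1
        omega
      obtain ⟨i, hi⟩ := hex
      unfold cIn
      rw [Finset.prod_eq_zero (Finset.mem_univ i) (by rw [MI_lt hi]; simp)]
      ring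
  case side1 =>
    intro j hj hne
    refine Finset.sum_eq_zero fun a ha => ?_
    rw [Finset.mem_piAntidiag] at ha
    have ha1 : ∑ i, a i = j := ha.1
    have hj' : j < (∑ i, T i) + 1 := Finset.mem_range.mp hj
    rw [cIn_vanish (by omega) _ j, zero_mul]

lemma phiHat_eq {d p : ℕ} (σ : ℝ → ℝ) (cf : Fin (p + 1) → ℝ)
    (hσ : ∀ y, σ y = ∑ k : Fin (p + 1), cf k * y ^ (k : ℕ))
    (w : Fin d → ℝ) (b : ℝ) (T : Fin d → ℕ) :
    phiHat d σ w b T = ∑ k : Fin (p + 1), cf k * Jf d (k : ℕ) T w b := by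
  unfold phiHat
  rw [show (fun x : Fin d → ℝ => σ (∑ i, w i * x i + b) * chiH T x)
      = fun x => ∑ k : Fin (p + 1), cf k * ((∑ i, w i * x i + b) ^ (k:ℕ) * chiH T x) by
    funext x
    rw [hσ, Finset.sum_mul]
    exact Finset.sum_congr rfl fun k _ => by ring]
  rw [MeasureTheory.integral_finset_sum (μ := gaussD d) (s := Finset.univ)
    (f := fun (k : Fin (p+1)) (x : Fin d → ℝ) =>
      cf k * ((∑ i, w i * x i + b) ^ (k:ℕ) * chiH T x))
    fun k _ => (integrable_inner T (k:ℕ) w b).const_mul _]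
  exact Finset.sum_congr rfl fun k _ => by rw [MeasureTheory.integral_const_mul]; rfl


-- Section 3c : feature-measure layer

lemma gauss_map_eps (ε : ℝ) (hε : 0 ≤ ε) :
    (gaussianReal 0 1).map (fun y => Real.sqrt ε * y) = gaussianReal 0 ε.toNNReal := by
  have h := gaussianReal_map_const_mul (μ := 0) (v := 1) (Real.sqrt ε)
  have h2 : (fun y : ℝ => Real.sqrt ε * y) = (Real.sqrt ε * ·) := rfl
  rw [h2, h]
  congr 1
  · ring
  · ext
    simp [Real.sq_sqrt hε, Real.coe_toNNReal _ hε]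

/-- moments of the `v`-Gaussian -/
noncomputable def Gv (v : NNReal) (n : ℕ) : ℝ := ∫ y, y ^ n ∂(gaussianReal 0 v)

lemma moment_eps (ε : ℝ) (hε : 0 ≤ ε) (n : ℕ) :
    Gv ε.toNNReal n = (Real.sqrt ε) ^ n * Gv 1 n := by
  unfold Gv
  rw [← gauss_map_eps ε hε,
    MeasureTheory.integral_map (by fun_prop) ((continuous_pow n).aestronglyMeasurable)]
  simp_rw [mul_pow]
  rw [MeasureTheory.integral_const_mul]

lemma integrable_pow_eps (ε : ℝ) (hε : 0 ≤ ε) (n : ℕ) :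
    Integrable (fun y : ℝ => y ^ n) (gaussianReal 0 ε.toNNReal) := by
  rw [← gauss_map_eps ε hε,
    integrable_map_measure ((continuous_pow n).aestronglyMeasurable) (by fun_prop)]
  refine ((integrable_pow_gamma n).const_mul ((Real.sqrt ε) ^ n)).congr
    (Filter.Eventually.of_forall fun y => ?_)
  simp [Function.comp, mul_pow]

lemma integrable_monWB {d : ℕ} (v : NNReal)
    (hint : ∀ n, Integrable (fun y : ℝ => y ^ n) (gaussianReal 0 v))
    (a : Fin d → ℕ) (c₀ : ℕ) :
    Integrable (fun wb : (Fin d → ℝ) × ℝ => (∏ i, wb.1 i ^ a i) * wb.2 ^ c₀)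
      (featMeas d v) :=
  (integrable_pi_gauss v (fun i y => y ^ a i) fun i => hint (a i)).mul_prod (hint c₀)

lemma integral_monWB {d : ℕ} (v : NNReal) (a : Fin d → ℕ) (c₀ : ℕ) :
    ∫ wb : (Fin d → ℝ) × ℝ, (∏ i, wb.1 i ^ a i) * wb.2 ^ c₀ ∂(featMeas d v)
      = (∏ i, Gv v (a i)) * Gv v c₀ := by
  unfold featMeas
  rw [MeasureTheory.integral_prod_mul (f := fun w : Fin d → ℝ => ∏ i, w i ^ a i)
    (g := fun b : ℝ => b ^ c₀), integral_pi_gauss v (fun i y => y ^ a i)]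
  rfl

lemma JJ_pointwise {d : ℕ} (k k' : ℕ) (T T' : Fin d → ℕ) (w : Fin d → ℝ) (b : ℝ) :
    Jf d k T w b * Jf d k' T' w b
      = ∑ j ∈ Finset.range (k+1), ∑ j' ∈ Finset.range (k'+1),
          ∑ a ∈ Finset.piAntidiag Finset.univ j, ∑ a' ∈ Finset.piAntidiag Finset.univ j',
            (cIn T k j a * cIn T' k' j' a')
              * ((∏ i, w i ^ (a i + a' i)) * b ^ ((k-j)+(k'-j'))) := by
  rw [J_expand, J_expand, Finset.sum_mul_sum]
  refine Finset.sum_congr rfl fun j hj => ?_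
  refine Finset.sum_congr rfl fun j' hj' => ?_
  rw [Finset.sum_mul_sum]
  refine Finset.sum_congr rfl fun a ha => ?_
  refine Finset.sum_congr rfl fun a' ha' => ?_
  simp_rw [pow_add]
  rw [Finset.prod_mul_distrib]
  ring

lemma JJ_integrable {d : ℕ} (v : NNReal)
    (hint : ∀ n, Integrable (fun y : ℝ => y ^ n) (gaussianReal 0 v))
    (k k' : ℕ) (T T' : Fin d → ℕ) :
    Integrable (fun wb : (Fin d → ℝ) × ℝ => Jf d k T wb.1 wb.2 * Jf d k' T' wb.1 wb.2)
      (featMeas d v) := by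
  rw [show (fun wb : (Fin d → ℝ) × ℝ => Jf d k T wb.1 wb.2 * Jf d k' T' wb.1 wb.2)
      = fun wb => ∑ j ∈ Finset.range (k+1), ∑ j' ∈ Finset.range (k'+1),
          ∑ a ∈ Finset.piAntidiag Finset.univ j, ∑ a' ∈ Finset.piAntidiag Finset.univ j',
            (cIn T k j a * cIn T' k' j' a')
              * ((∏ i, wb.1 i ^ (a i + a' i)) * wb.2 ^ ((k-j)+(k'-j')))
    from funext fun wb => JJ_pointwise k k' T T' wb.1 wb.2]
  exact integrable_finset_sum _ fun j _ => integrable_finset_sum _ fun j' _ =>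
    integrable_finset_sum _ fun a _ => integrable_finset_sum _ fun a' _ =>
      (integrable_monWB v hint _ _).const_mul _

/-- second-moment of two `J`s under the feature measure -/
noncomputable def ENv (d : ℕ) (v : NNReal) (k k' : ℕ) (T T' : Fin d → ℕ) : ℝ :=
  ∫ wb : (Fin d → ℝ) × ℝ, Jf d k T wb.1 wb.2 * Jf d k' T' wb.1 wb.2 ∂(featMeas d v)

lemma EN_eq {d : ℕ} (v : NNReal)
    (hint : ∀ n, Integrable (fun y : ℝ => y ^ n) (gaussianReal 0 v))
    (k k' : ℕ) (T T' : Fin d → ℕ) :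
    ENv d v k k' T T'
      = ∑ j ∈ Finset.range (k+1), ∑ j' ∈ Finset.range (k'+1),
          ∑ a ∈ Finset.piAntidiag Finset.univ j, ∑ a' ∈ Finset.piAntidiag Finset.univ j',
            (cIn T k j a * cIn T' k' j' a')
              * ((∏ i, Gv v (a i + a' i)) * Gv v ((k-j)+(k'-j'))) := by
  unfold ENv
  rw [show (fun wb : (Fin d → ℝ) × ℝ => Jf d k T wb.1 wb.2 * Jf d k' T' wb.1 wb.2)
      = fun wb => ∑ j ∈ Finset.range (k+1), ∑ j' ∈ Finset.range (k'+1),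
          ∑ a ∈ Finset.piAntidiag Finset.univ j, ∑ a' ∈ Finset.piAntidiag Finset.univ j',
            (cIn T k j a * cIn T' k' j' a')
              * ((∏ i, wb.1 i ^ (a i + a' i)) * wb.2 ^ ((k-j)+(k'-j')))
    from funext fun wb => JJ_pointwise k k' T T' wb.1 wb.2]
  rw [MeasureTheory.integral_finset_sum _ (fun j _ => integrable_finset_sum _ fun j' _ =>
    integrable_finset_sum _ fun a _ => integrable_finset_sum _ fun a' _ =>
      (integrable_monWB v hint _ _).const_mul _)]
  refine Finset.sum_congr rfl fun j _ => ?_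
  rw [MeasureTheory.integral_finset_sum _ (fun j' _ =>
    integrable_finset_sum _ fun a _ => integrable_finset_sum _ fun a' _ =>
      (integrable_monWB v hint _ _).const_mul _)]
  refine Finset.sum_congr rfl fun j' _ => ?_
  rw [MeasureTheory.integral_finset_sum _ (fun a _ => integrable_finset_sum _ fun a' _ =>
      (integrable_monWB v hint _ _).const_mul _)]
  refine Finset.sum_congr rfl fun a _ => ?_
  rw [MeasureTheory.integral_finset_sum _ (fun a' _ =>
      (integrable_monWB v hint _ _).const_mul _)]
  refine Finset.sum_congr rfl fun a' _ => ?_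
  rw [MeasureTheory.integral_const_mul, integral_monWB]

lemma EN_scale {d : ℕ} (ε : ℝ) (hε : 0 < ε) (k k' : ℕ) (T T' : Fin d → ℕ) :
    ENv d ε.toNNReal k k' T T' = (Real.sqrt ε) ^ (k + k') * ENv d 1 k k' T T' := by
  rw [EN_eq ε.toNNReal (integrable_pow_eps ε hε.le) k k' T T',
    EN_eq 1 integrable_pow_gamma k k' T T', Finset.mul_sum]
  refine Finset.sum_congr rfl fun j hj => ?_
  rw [Finset.mul_sum]
  refine Finset.sum_congr rfl fun j' hj' => ?_
  rw [Finset.mul_sum]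
  refine Finset.sum_congr rfl fun a ha => ?_
  rw [Finset.mul_sum]
  refine Finset.sum_congr rfl fun a' ha' => ?_
  rw [Finset.mem_piAntidiag] at ha ha'
  rw [Finset.mem_range] at hj hj'
  have ha1 : ∑ i, a i = j := ha.1
  have ha1' : ∑ i, a' i = j' := ha'.1
  have hprod : (∏ i, Gv ε.toNNReal (a i + a' i))
      = (Real.sqrt ε) ^ (j + j') * ∏ i, Gv 1 (a i + a' i) := by
    calc (∏ i, Gv ε.toNNReal (a i + a' i))
        = ∏ i, ((Real.sqrt ε) ^ (a i + a' i) * Gv 1 (a i + a' i)) :=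
          Finset.prod_congr rfl fun i _ => moment_eps ε hε.le _
      _ = (∏ i, (Real.sqrt ε) ^ (a i + a' i)) * ∏ i, Gv 1 (a i + a' i) :=
          Finset.prod_mul_distrib
      _ = (Real.sqrt ε) ^ (j + j') * ∏ i, Gv 1 (a i + a' i) := by
          rw [Finset.prod_pow_eq_pow_sum]
          congr 1
          rw [Finset.sum_add_distrib, ha1, ha1']
  rw [hprod, moment_eps ε hε.le ((k-j)+(k'-j'))]
  have hpow : (Real.sqrt ε) ^ (j + j') * (Real.sqrt ε) ^ ((k-j)+(k'-j'))
      = (Real.sqrt ε) ^ (k + k') := by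
    rw [← pow_add]
    congr 1
    omega
  rw [← hpow]
  ring


-- Section 3d : the rescaled matrix

lemma EN_vanish_left {d : ℕ} (v : NNReal) {k : ℕ} {T : Fin d → ℕ} (h : k < ∑ i, T i)
    (k' : ℕ) (T' : Fin d → ℕ) : ENv d v k k' T T' = 0 := by
  unfold ENv
  rw [show (fun wb : (Fin d → ℝ) × ℝ => Jf d k T wb.1 wb.2 * Jf d k' T' wb.1 wb.2)
      = fun _ => (0:ℝ) from funext fun wb => by rw [Jf_vanish h, zero_mul]]
  exact integral_zero _ _

lemma EN_vanish_right {d : ℕ} (v : NNReal) (k : ℕ) (T : Fin d → ℕ) {k' : ℕ} {T' : Fin d → ℕ}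
    (h : k' < ∑ i, T' i) : ENv d v k k' T T' = 0 := by
  unfold ENv
  rw [show (fun wb : (Fin d → ℝ) × ℝ => Jf d k T wb.1 wb.2 * Jf d k' T' wb.1 wb.2)
      = fun _ => (0:ℝ) from funext fun wb => by rw [Jf_vanish h, mul_zero]]
  exact integral_zero _ _

/-- the rescaled matrix `M(s)` -/
noncomputable def MmM (d p : ℕ) (cf : Fin (p+1) → ℝ) (s : ℝ) :
    Matrix (MIdx d p) (MIdx d p) ℝ := fun T T' =>
  ∑ k : Fin (p+1), ∑ k' : Fin (p+1),
    (cf k * cf k') * (s ^ (((k:ℕ) - ∑ i, T.toFun i) + ((k':ℕ) - ∑ i, T'.toFun i))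
      * ENv d 1 (k:ℕ) (k':ℕ) T.toFun T'.toFun)

lemma Phi_eq {d p : ℕ} (σ : ℝ → ℝ) (cf : Fin (p + 1) → ℝ)
    (hσ : ∀ y, σ y = ∑ k : Fin (p + 1), cf k * y ^ (k : ℕ))
    {ε : ℝ} (hε : 0 < ε) (T T' : MIdx d p) :
    PhiMat d p σ ε T T'
      = ∑ k : Fin (p+1), ∑ k' : Fin (p+1),
          (cf k * cf k') * ((Real.sqrt ε) ^ ((k:ℕ)+(k':ℕ))
            * ENv d 1 (k:ℕ) (k':ℕ) T.toFun T'.toFun) := by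
  have hint := integrable_pow_eps ε hε.le
  show (∫ wb : (Fin d → ℝ) × ℝ, phiHat d σ wb.1 wb.2 T.toFun * phiHat d σ wb.1 wb.2 T'.toFun
      ∂(featMeas d ε.toNNReal)) = _
  rw [show (fun wb : (Fin d → ℝ) × ℝ =>
        phiHat d σ wb.1 wb.2 T.toFun * phiHat d σ wb.1 wb.2 T'.toFun)
      = fun wb => ∑ k : Fin (p+1), ∑ k' : Fin (p+1),
          (cf k * cf k') * (Jf d (k:ℕ) T.toFun wb.1 wb.2 * Jf d (k':ℕ) T'.toFun wb.1 wb.2) by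
    funext wb
    rw [phiHat_eq σ cf hσ, phiHat_eq σ cf hσ, Finset.sum_mul_sum]
    exact Finset.sum_congr rfl fun k _ => Finset.sum_congr rfl fun k' _ => by ring]
  rw [MeasureTheory.integral_finset_sum _ (fun k _ => integrable_finset_sum _ fun k' _ =>
    (JJ_integrable ε.toNNReal hint _ _ _ _).const_mul _)]
  refine Finset.sum_congr rfl fun k _ => ?_
  rw [MeasureTheory.integral_finset_sum _ (fun k' _ =>
    (JJ_integrable ε.toNNReal hint _ _ _ _).const_mul _)]
  refine Finset.sum_congr rfl fun k' _ => ?_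
  rw [MeasureTheory.integral_const_mul]
  show cf k * cf k' * ENv d ε.toNNReal (k:ℕ) (k':ℕ) T.toFun T'.toFun = _
  rw [EN_scale ε hε]

lemma Phi_Mm {d p : ℕ} (σ : ℝ → ℝ) (cf : Fin (p + 1) → ℝ)
    (hσ : ∀ y, σ y = ∑ k : Fin (p + 1), cf k * y ^ (k : ℕ))
    {ε : ℝ} (hε : 0 < ε) (T T' : MIdx d p) :
    PhiMat d p σ ε T T'
      = (Real.sqrt ε) ^ ((∑ i, T.toFun i) + (∑ i, T'.toFun i))
          * MmM d p cf (Real.sqrt ε) T T' := by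
  rw [Phi_eq σ cf hσ hε T T']
  unfold MmM
  rw [Finset.mul_sum]
  refine Finset.sum_congr rfl fun k _ => ?_
  rw [Finset.mul_sum]
  refine Finset.sum_congr rfl fun k' _ => ?_
  by_cases hk : (k:ℕ) < ∑ i, T.toFun i
  · rw [EN_vanish_left 1 hk]
    ring
  by_cases hk' : (k':ℕ) < ∑ i, T'.toFun i
  · rw [EN_vanish_right 1 (k:ℕ) T.toFun hk']
    ring
  push_neg at hk hk'
  have hpow : (Real.sqrt ε) ^ ((∑ i, T.toFun i) + (∑ i, T'.toFun i))
      * (Real.sqrt ε) ^ (((k:ℕ) - ∑ i, T.toFun i) + ((k':ℕ) - ∑ i, T'.toFun i))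
      = (Real.sqrt ε) ^ ((k:ℕ)+(k':ℕ)) := by
    rw [← pow_add]
    congr 1
    omega
  rw [← hpow]
  ring

/-- the Gram vector functions -/
noncomputable def psiF (d p : ℕ) (cf : Fin (p+1) → ℝ) (s : ℝ) (T : MIdx d p)
    (wb : (Fin d → ℝ) × ℝ) : ℝ :=
  ∑ k : Fin (p+1), (cf k * s ^ ((k:ℕ) - ∑ i, T.toFun i)) * Jf d (k:ℕ) T.toFun wb.1 wb.2

lemma psi_mul {d p : ℕ} (cf : Fin (p+1) → ℝ) (s : ℝ) (T T' : MIdx d p)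
    (wb : (Fin d → ℝ) × ℝ) :
    psiF d p cf s T wb * psiF d p cf s T' wb
      = ∑ k : Fin (p+1), ∑ k' : Fin (p+1),
          ((cf k * s ^ ((k:ℕ) - ∑ i, T.toFun i)) * (cf k' * s ^ ((k':ℕ) - ∑ i, T'.toFun i)))
            * (Jf d (k:ℕ) T.toFun wb.1 wb.2 * Jf d (k':ℕ) T'.toFun wb.1 wb.2) := by
  unfold psiF
  rw [Finset.sum_mul_sum]
  exact Finset.sum_congr rfl fun k _ => Finset.sum_congr rfl fun k' _ => by ring

lemma psi_mul_integrable {d p : ℕ} (cf : Fin (p+1) → ℝ) (s : ℝ) (T T' : MIdx d p) :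
    Integrable (fun wb => psiF d p cf s T wb * psiF d p cf s T' wb) (featMeas d 1) := by
  rw [show (fun wb => psiF d p cf s T wb * psiF d p cf s T' wb)
      = fun wb => ∑ k : Fin (p+1), ∑ k' : Fin (p+1),
          ((cf k * s ^ ((k:ℕ) - ∑ i, T.toFun i)) * (cf k' * s ^ ((k':ℕ) - ∑ i, T'.toFun i)))
            * (Jf d (k:ℕ) T.toFun wb.1 wb.2 * Jf d (k':ℕ) T'.toFun wb.1 wb.2)
    from funext fun wb => psi_mul cf s T T' wb]
  exact integrable_finset_sum _ fun k _ => integrable_finset_sum _ fun k' _ =>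
    (JJ_integrable 1 integrable_pow_gamma _ _ _ _).const_mul _

lemma Mm_gram {d p : ℕ} (cf : Fin (p+1) → ℝ) (s : ℝ) (T T' : MIdx d p) :
    MmM d p cf s T T'
      = ∫ wb, psiF d p cf s T wb * psiF d p cf s T' wb ∂(featMeas d 1) := by
  rw [show (fun wb => psiF d p cf s T wb * psiF d p cf s T' wb)
      = fun wb => ∑ k : Fin (p+1), ∑ k' : Fin (p+1),
          ((cf k * s ^ ((k:ℕ) - ∑ i, T.toFun i)) * (cf k' * s ^ ((k':ℕ) - ∑ i, T'.toFun i)))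
            * (Jf d (k:ℕ) T.toFun wb.1 wb.2 * Jf d (k':ℕ) T'.toFun wb.1 wb.2)
    from funext fun wb => psi_mul cf s T T' wb]
  rw [MeasureTheory.integral_finset_sum _ (fun k _ => integrable_finset_sum _ fun k' _ =>
    (JJ_integrable 1 integrable_pow_gamma _ _ _ _).const_mul _)]
  unfold MmM
  refine Finset.sum_congr rfl fun k _ => ?_
  rw [MeasureTheory.integral_finset_sum _ (fun k' _ =>
    (JJ_integrable 1 integrable_pow_gamma _ _ _ _).const_mul _)]
  refine Finset.sum_congr rfl fun k' _ => ?_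
  rw [MeasureTheory.integral_const_mul]
  show _ = (cf k * s ^ ((k:ℕ) - ∑ i, T.toFun i)) * (cf k' * s ^ ((k':ℕ) - ∑ i, T'.toFun i))
      * ENv d 1 (k:ℕ) (k':ℕ) T.toFun T'.toFun
  rw [pow_add]
  ring

lemma Mm_quad {d p : ℕ} (cf : Fin (p+1) → ℝ) (s : ℝ) (x : MIdx d p → ℝ) :
    dotProduct x ((MmM d p cf s).mulVec x)
      = ∫ wb, (∑ T, x T * psiF d p cf s T wb)^2 ∂(featMeas d 1) := by
  have h1 : ∀ wb : (Fin d → ℝ) × ℝ, (∑ T, x T * psiF d p cf s T wb)^2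
      = ∑ T, ∑ T', (x T * x T') * (psiF d p cf s T wb * psiF d p cf s T' wb) := by
    intro wb
    rw [sq, Finset.sum_mul_sum]
    exact Finset.sum_congr rfl fun T _ => Finset.sum_congr rfl fun T' _ => by ring
  rw [show (fun wb => (∑ T, x T * psiF d p cf s T wb)^2)
      = fun wb => ∑ T, ∑ T', (x T * x T') * (psiF d p cf s T wb * psiF d p cf s T' wb)
    from funext h1]
  rw [MeasureTheory.integral_finset_sum _ (fun T _ => integrable_finset_sum _ fun T' _ =>
    (psi_mul_integrable cf s T T').const_mul _)]
  simp only [dotProduct, Matrix.mulVec, Finset.mul_sum]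
  refine Finset.sum_congr rfl fun T _ => ?_
  rw [MeasureTheory.integral_finset_sum _ (fun T' _ =>
    (psi_mul_integrable cf s T T').const_mul _)]
  refine Finset.sum_congr rfl fun T' _ => ?_
  rw [MeasureTheory.integral_const_mul, Mm_gram cf s T T']
  ring

lemma Mm_posSemidef {d p : ℕ} (cf : Fin (p+1) → ℝ) (s : ℝ) :
    (MmM d p cf s).PosSemidef := by
  refine Matrix.PosSemidef.of_dotProduct_mulVec_nonneg ?_ ?_
  · show (MmM d p cf s).conjTranspose = MmM d p cf s
    ext T T'
    rw [Matrix.conjTranspose_apply]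
    show star (MmM d p cf s T' T) = _
    rw [star_trivial]
    rw [Mm_gram cf s T' T, Mm_gram cf s T T']
    congr 1
    funext wb
    ring
  · intro x
    have hsx : star x = x := by
      funext T
      simp
    rw [hsx, Mm_quad cf s x]
    exact MeasureTheory.integral_nonneg fun wb => sq_nonneg _


-- Section 3e : positive definiteness at s = 0

lemma psi_zero {d p : ℕ} (cf : Fin (p+1) → ℝ) (T : MIdx d p) (wb : (Fin d → ℝ) × ℝ) :
    psiF d p cf 0 T wb
      = cf ⟨∑ i, T.toFun i, Nat.lt_succ_of_le T.2⟩
          * (AT T.toFun * ∏ i, wb.1 i ^ T.toFun i) := by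
  unfold psiF
  rw [Finset.sum_eq_single_of_mem (⟨∑ i, T.toFun i, Nat.lt_succ_of_le T.2⟩ : Fin (p+1))
    (Finset.mem_univ _) ?side]
  · show (cf _ * (0:ℝ) ^ ((∑ i, T.toFun i) - ∑ i, T.toFun i)) * Jf d (∑ i, T.toFun i) T.toFun wb.1 wb.2 = _
    rw [Nat.sub_self, pow_zero, mul_one, Jf_diag]
  case side =>
    intro k _ hk
    have hne : (k:ℕ) ≠ ∑ i, T.toFun i := by
      intro h
      exact hk (Fin.ext h)
    rcases lt_or_gt_of_ne hne with h | h
    · rw [Nat.sub_eq_zero_of_le h.le, pow_zero, mul_one, Jf_vanish h]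
      ring
    · rw [zero_pow (by omega : (k:ℕ) - ∑ i, T.toFun i ≠ 0)]
      ring

lemma gaussOpenPos : (gaussianReal 0 (1:NNReal)).IsOpenPosMeasure := by
  constructor
  intro U hU hne h0
  have habs := gaussianReal_absolutelyContinuous' 0 one_ne_zero
  have hv0 : (volume : Measure ℝ) U = 0 := habs h0
  exact (hU.measure_pos volume hne).ne' hv0

lemma featOpenPos (d : ℕ) : (featMeas d 1).IsOpenPosMeasure := by
  haveI := gaussOpenPos
  haveI : (Measure.pi fun _ : Fin d => gaussianReal 0 (1:NNReal)).IsOpenPosMeasure :=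
    Measure.pi.isOpenPosMeasure _
  exact Measure.prod.instIsOpenPosMeasure

lemma toFun_injective {d p : ℕ} : Function.Injective (MIdx.toFun (d := d) (p := p)) := by
  intro T T' h
  refine Subtype.ext (funext fun i => Fin.ext ?_)
  exact congrFun h i

lemma Mm_zero_posDef {d p : ℕ} (cf : Fin (p+1) → ℝ) (hcf : ∀ k, cf k ≠ 0) :
    (MmM d p cf 0).PosDef := by
  refine Matrix.PosDef.of_dotProduct_mulVec_pos (Mm_posSemidef cf 0).1 fun x hx => ?_
  have hsx : star x = x := by funext T; simp
  rw [hsx]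
  have hge : 0 ≤ dotProduct x ((MmM d p cf 0).mulVec x) := by
    have h := (Mm_posSemidef cf 0).dotProduct_mulVec_nonneg x
    rwa [hsx] at h
  refine lt_of_le_of_ne hge (Ne.symm ?_)
  intro h0
  -- the Gram function, in explicit monomial form
  set G : (Fin d → ℝ) × ℝ → ℝ := fun wb => ∑ T : MIdx d p,
    (x T * (cf ⟨∑ i, T.toFun i, Nat.lt_succ_of_le T.2⟩ * AT T.toFun))
      * ∏ i, wb.1 i ^ T.toFun i with hG
  have hFG : (fun wb => ∑ T : MIdx d p, x T * psiF d p cf 0 T wb) = G := by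
    funext wb
    refine Finset.sum_congr rfl fun T _ => ?_
    rw [psi_zero cf T wb]
    ring
  have hquad : dotProduct x ((MmM d p cf 0).mulVec x)
      = ∫ wb, (G wb)^2 ∂(featMeas d 1) := by
    rw [Mm_quad cf 0 x]
    congr 1
    funext wb
    rw [← hFG]
  have hGcont : Continuous G := by
    refine continuous_finset_sum _ fun T _ => Continuous.mul continuous_const ?_
    exact continuous_finset_prod _ fun i _ =>
      (((continuous_apply i).comp continuous_fst).pow _)
  have hG2int : Integrable (fun wb => (G wb)^2) (featMeas d 1) := by
    have : (fun wb : (Fin d → ℝ) × ℝ => (G wb)^2)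
        = fun wb => ∑ T : MIdx d p, ∑ T' : MIdx d p,
            ((x T * (cf ⟨∑ i, T.toFun i, Nat.lt_succ_of_le T.2⟩ * AT T.toFun))
              * (x T' * (cf ⟨∑ i, T'.toFun i, Nat.lt_succ_of_le T'.2⟩ * AT T'.toFun)))
            * ((∏ i, wb.1 i ^ (T.toFun i + T'.toFun i)) * wb.2 ^ 0) := by
      funext wb
      rw [hG, sq, Finset.sum_mul_sum]
      refine Finset.sum_congr rfl fun T _ => Finset.sum_congr rfl fun T' _ => ?_
      simp_rw [pow_add]
      rw [Finset.prod_mul_distrib]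
      ring
    rw [this]
    exact integrable_finset_sum _ fun T _ => integrable_finset_sum _ fun T' _ =>
      (integrable_monWB 1 integrable_pow_gamma _ _).const_mul _
  have hae : (fun wb => (G wb)^2) =ᶠ[ae (featMeas d 1)] 0 := by
    rw [← MeasureTheory.integral_eq_zero_iff_of_nonneg (fun wb => sq_nonneg (G wb)) hG2int]
    rw [← hquad, h0]
  have haeG : G =ᶠ[ae (featMeas d 1)] 0 := by
    refine hae.mono fun wb h => ?_
    have h' : (G wb)^2 = 0 := h
    simpa using pow_eq_zero_iff (n := 2) (by norm_num) |>.mp h'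
  haveI := featOpenPos d
  have hGzero : G = 0 := (hGcont.ae_eq_iff_eq (featMeas d 1) continuous_const).mp haeG
  -- extract coefficients via MvPolynomial
  apply hx
  funext T₀
  let toF : MIdx d p → (Fin d →₀ ℕ) := fun T => Finsupp.equivFunOnFinite.symm T.toFun
  have htoF_inj : Function.Injective toF := fun T T' h =>
    toFun_injective (Finsupp.equivFunOnFinite.symm.injective h)
  let Q : MvPolynomial (Fin d) ℝ := ∑ T : MIdx d p,
    MvPolynomial.monomial (toF T)
      (x T * (cf ⟨∑ i, T.toFun i, Nat.lt_succ_of_le T.2⟩ * AT T.toFun))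
  have heval : ∀ w : Fin d → ℝ, MvPolynomial.eval w Q = G (w, 0) := by
    intro w
    rw [show Q = ∑ T : MIdx d p, MvPolynomial.monomial (toF T)
      (x T * (cf ⟨∑ i, T.toFun i, Nat.lt_succ_of_le T.2⟩ * AT T.toFun)) from rfl]
    rw [map_sum]
    refine Finset.sum_congr rfl fun T _ => ?_
    rw [MvPolynomial.eval_monomial]
    congr 1
    rw [Finsupp.prod_pow]
    rfl
  have hQ0 : Q = 0 := by
    refine MvPolynomial.funext fun w => ?_
    rw [heval w, hGzero]
    simp
  have hcoeff : MvPolynomial.coeff (toF T₀) Q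
      = x T₀ * (cf ⟨∑ i, T₀.toFun i, Nat.lt_succ_of_le T₀.2⟩ * AT T₀.toFun) := by
    rw [show Q = ∑ T : MIdx d p, MvPolynomial.monomial (toF T)
      (x T * (cf ⟨∑ i, T.toFun i, Nat.lt_succ_of_le T.2⟩ * AT T.toFun)) from rfl]
    rw [MvPolynomial.coeff_sum]
    rw [Finset.sum_eq_single_of_mem T₀ (Finset.mem_univ _) ?hside]
    · rw [MvPolynomial.coeff_monomial, if_pos rfl]
    case hside =>
      intro T _ hne
      rw [MvPolynomial.coeff_monomial, if_neg (fun h => hne (htoF_inj h))]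
  rw [hQ0] at hcoeff
  simp only [MvPolynomial.coeff_zero] at hcoeff
  have := mul_ne_zero (hcf ⟨∑ i, T₀.toFun i, Nat.lt_succ_of_le T₀.2⟩) (AT_pos T₀.toFun).ne'
  rcases mul_eq_zero.mp hcoeff.symm with h | h
  · exact h
  · exact absurd h this


-- Section 4 : matrix analysis lemmas

lemma posDef_of_posSemidef_det {n : Type*} [Fintype n] [DecidableEq n]
    {M : Matrix n n ℝ} (h : M.PosSemidef) (hdet : M.det ≠ 0) : M.PosDef := by
  refine Matrix.PosDef.of_dotProduct_mulVec_pos h.1 fun x hx => ?_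
  have hge := h.dotProduct_mulVec_nonneg x
  refine lt_of_le_of_ne hge (Ne.symm fun h0 => ?_)
  have hmv : M.mulVec x = 0 := (h.dotProduct_mulVec_zero_iff x).mp h0
  exact hdet (Matrix.exists_mulVec_eq_zero_iff.mp ⟨x, hx, hmv⟩)

lemma posSemidef_smul {n : Type*} [Fintype n] {M : Matrix n n ℝ}
    (h : M.PosSemidef) {c : ℝ} (hc : 0 ≤ c) : (c • M).PosSemidef := by
  refine Matrix.PosSemidef.of_dotProduct_mulVec_nonneg ?_ ?_
  · show (c • M).conjTranspose = c • M
    rw [Matrix.conjTranspose_smul, h.1]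
    congr 1
  · intro x
    have : (c • M).mulVec x = c • M.mulVec x := by
      rw [Matrix.smul_mulVec]
    rw [this]
    have hdot : dotProduct (star x) (c • M.mulVec x)
        = c * dotProduct (star x) (M.mulVec x) := by
      simp [dotProduct, Finset.mul_sum]
      exact Finset.sum_congr rfl fun i _ => by ring
    rw [hdot]
    exact mul_nonneg hc (h.dotProduct_mulVec_nonneg x)

open scoped MatrixOrder in
lemma inv_sub_smul_posSemidef {n : Type*} [Fintype n] [DecidableEq n]
    {M : Matrix n n ℝ} (hM : M.PosDef) {c : ℝ} (hc : 0 < c)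
    (h : ((c⁻¹ • (1 : Matrix n n ℝ)) - M).PosSemidef) :
    (M⁻¹ - c • (1 : Matrix n n ℝ)).PosSemidef := by
  have hPSD := hM.posSemidef
  have hdet : IsUnit M.det := hM.det_pos.ne'.isUnit
  have hMinv : M⁻¹ * M = 1 := Matrix.nonsing_inv_mul M hdet
  have hMinv' : M * M⁻¹ = 1 := Matrix.mul_nonsing_inv M hdet
  set S := CFC.sqrt M with hSdef
  have hSS : S * S = M := CFC.sqrt_mul_sqrt_self M hPSD.nonneg
  have hSh : S.conjTranspose = S := (Matrix.nonneg_iff_posSemidef.mp (CFC.sqrt_nonneg M)).1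
  have hMih : (M⁻¹).conjTranspose = M⁻¹ := by
    rw [Matrix.conjTranspose_nonsing_inv, hM.1]
  have key := h.conjTranspose_mul_mul_same (B := S * M⁻¹)
  have hB : (S * M⁻¹).conjTranspose = M⁻¹ * S := by
    rw [Matrix.conjTranspose_mul, hSh, hMih]
  have hexp : (S * M⁻¹).conjTranspose * ((c⁻¹ • (1 : Matrix n n ℝ)) - M) * (S * M⁻¹)
      = c⁻¹ • M⁻¹ - 1 := by
    rw [hB, Matrix.mul_sub, Matrix.sub_mul]
    have e1 : M⁻¹ * S * (c⁻¹ • (1 : Matrix n n ℝ)) * (S * M⁻¹) = c⁻¹ • M⁻¹ := by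
      rw [Matrix.mul_smul, Matrix.mul_one, Matrix.smul_mul]
      congr 1
      calc M⁻¹ * S * (S * M⁻¹) = M⁻¹ * (S * S) * M⁻¹ := by
            simp only [Matrix.mul_assoc]
        _ = M⁻¹ := by rw [hSS, hMinv, Matrix.one_mul]
    have e2 : M⁻¹ * S * M * (S * M⁻¹) = 1 := by
      have hc2 : S * M * S = M * M := by
        rw [← hSS]
        simp only [Matrix.mul_assoc]
      calc M⁻¹ * S * M * (S * M⁻¹) = M⁻¹ * (S * M * S) * M⁻¹ := by
            simp only [Matrix.mul_assoc]
        _ = M⁻¹ * (M * M) * M⁻¹ := by rw [hc2]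
        _ = (M⁻¹ * M) * (M * M⁻¹) := by simp only [Matrix.mul_assoc]
        _ = 1 := by rw [hMinv, hMinv', Matrix.one_mul]
    rw [e1, e2]
  rw [hexp] at key
  have hfinal : c • (c⁻¹ • M⁻¹ - 1) = M⁻¹ - c • (1 : Matrix n n ℝ) := by
    rw [smul_sub, smul_smul, mul_inv_cancel₀ hc.ne', one_smul]
  rw [← hfinal]
  exact posSemidef_smul key hc.le

lemma sub_quad_psd {n : Type*} [Fintype n] [DecidableEq n]
    (M : Matrix n n ℝ) (hH : M.IsHermitian) (Bent : n → n → ℝ)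
    (hB : ∀ i j, |M i j| ≤ Bent i j) :
    (((∑ i, ∑ j, Bent i j) • (1 : Matrix n n ℝ)) - M).PosSemidef := by
  refine Matrix.PosSemidef.of_dotProduct_mulVec_nonneg ?_ ?_
  · show _ = _
    rw [Matrix.conjTranspose_sub, Matrix.conjTranspose_smul, Matrix.conjTranspose_one, hH]
    congr 1
  · intro x
    have hsx : star x = x := by funext i; simp
    rw [hsx]
    have hxx : (0:ℝ) ≤ dotProduct x x :=
      Finset.sum_nonneg fun i _ => mul_self_nonneg _
    have hsub : (((∑ i, ∑ j, Bent i j) • (1 : Matrix n n ℝ)) - M).mulVec x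
        = (∑ i, ∑ j, Bent i j) • x - M.mulVec x := by
      rw [Matrix.sub_mulVec, Matrix.smul_mulVec, Matrix.one_mulVec]
    rw [hsub, dotProduct_sub]
    have hdsm : dotProduct x ((∑ i, ∑ j, Bent i j) • x)
        = (∑ i, ∑ j, Bent i j) * dotProduct x x := by
      simp [dotProduct, Finset.mul_sum]
      exact Finset.sum_congr rfl fun i _ => by ring
    rw [hdsm]
    have hmain : dotProduct x (M.mulVec x)
        ≤ (∑ i, ∑ j, Bent i j) * dotProduct x x := by
      have heq : dotProduct x (M.mulVec x)
          = ∑ i, ∑ j, x i * (M i j * x j) := by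
        simp [dotProduct, Matrix.mulVec, Finset.mul_sum]
      rw [heq, Finset.sum_mul]
      refine Finset.sum_le_sum fun i _ => ?_
      rw [Finset.sum_mul]
      refine Finset.sum_le_sum fun j _ => ?_
      have hxij : |x i * x j| ≤ dotProduct x x := by
        have h1 : |x i| * |x j| ≤ (x i * x i + x j * x j)/2 := by
          nlinarith [sq_nonneg (|x i| - |x j|), sq_abs (x i), sq_abs (x j)]
        have h2 : x i * x i ≤ dotProduct x x :=
          Finset.single_le_sum (f := fun k => x k * x k)
            (fun k _ => mul_self_nonneg _) (Finset.mem_univ i)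
        have h3 : x j * x j ≤ dotProduct x x :=
          Finset.single_le_sum (f := fun k => x k * x k)
            (fun k _ => mul_self_nonneg _) (Finset.mem_univ j)
        rw [abs_mul]
        linarith
      have hBnn : 0 ≤ Bent i j := le_trans (abs_nonneg _) (hB i j)
      calc x i * (M i j * x j) ≤ |x i * (M i j * x j)| := le_abs_self _
        _ = |M i j| * |x i * x j| := by
            rw [abs_mul, abs_mul, abs_mul]
            ring
        _ ≤ Bent i j * dotProduct x x :=
            mul_le_mul (hB i j) hxij (abs_nonneg _) hBnn
    linarith


lemma smul_one_sub_psd_of_bound {n : Type*} [Fintype n] [DecidableEq n]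
    (M : Matrix n n ℝ) (hH : M.IsHermitian) (Bent : n → n → ℝ)
    (hB : ∀ i j, |M i j| ≤ Bent i j) {b : ℝ} (hb : ∑ i, ∑ j, Bent i j ≤ b) :
    ((b • (1 : Matrix n n ℝ)) - M).PosSemidef := by
  have h1 := sub_quad_psd M hH Bent hB
  have hsplit : b • (1 : Matrix n n ℝ) - M
      = ((b - ∑ i, ∑ j, Bent i j) • (1 : Matrix n n ℝ))
        + (((∑ i, ∑ j, Bent i j) • (1 : Matrix n n ℝ)) - M) := by
    rw [sub_smul]
    abel
  rw [hsplit]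
  exact (posSemidef_smul Matrix.PosSemidef.one (by linarith)).add h1

lemma Mm_entry_bound {d p : ℕ} (cf : Fin (p+1) → ℝ) {s : ℝ} (hs0 : 0 ≤ s) (hs1 : s ≤ 1)
    (T T' : MIdx d p) :
    |MmM d p cf s T T'| ≤ ∑ k : Fin (p+1), ∑ k' : Fin (p+1),
      |cf k * cf k'| * |ENv d 1 (k:ℕ) (k':ℕ) T.toFun T'.toFun| := by
  unfold MmM
  refine (Finset.abs_sum_le_sum_abs _ _).trans (Finset.sum_le_sum fun k _ => ?_)
  refine (Finset.abs_sum_le_sum_abs _ _).trans (Finset.sum_le_sum fun k' _ => ?_)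
  rw [abs_mul]
  have h1 : |s ^ (((k:ℕ) - ∑ i, T.toFun i) + ((k':ℕ) - ∑ i, T'.toFun i))| ≤ 1 := by
    rw [abs_pow, abs_of_nonneg hs0]
    exact pow_le_one₀ hs0 hs1
  refine mul_le_mul_of_nonneg_left ?_ (abs_nonneg _)
  rw [abs_mul]
  exact mul_le_of_le_one_left (abs_nonneg _) h1

lemma Mm_continuous {d p : ℕ} (cf : Fin (p+1) → ℝ) :
    Continuous fun s : ℝ => MmM d p cf s := by
  refine continuous_matrix fun T T' => ?_
  refine continuous_finset_sum _ fun k _ => continuous_finset_sum _ fun k' _ => ?_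
  exact continuous_const.mul ((continuous_pow _).mul continuous_const)

/-- under Assumption A there are c > 0 and ε₀ > 0 such that for all
ε ∈ (0, ε₀) the matrix Φ(ε) is invertible and Φ(ε)⁻¹ − c D_ε is positive semidefinite,
where D_ε is diagonal with entries ε^{−|T|}. -/
theorem stmt4 (d p : ℕ) (hd : 1 ≤ d) (hp : 1 ≤ p)
    (σ : ℝ → ℝ) (cf : Fin (p + 1) → ℝ) (hcf : ∀ k, cf k ≠ 0)
    (hσ : ∀ y, σ y = ∑ k : Fin (p + 1), cf k * y ^ (k : ℕ)) :
    ∃ c > (0 : ℝ), ∃ ε₀ > (0 : ℝ), ∀ ε : ℝ, 0 < ε → ε < ε₀ →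
      IsUnit (PhiMat d p σ ε).det ∧
        ((PhiMat d p σ ε)⁻¹ -
            c • Matrix.diagonal (fun T : MIdx d p =>
              (ε ^ (∑ i, (T.1 i : ℕ)))⁻¹)).PosSemidef := by
  classical
  have hpd0 : (MmM d p cf 0).PosDef := Mm_zero_posDef cf hcf
  have hdet0 : 0 < (MmM d p cf 0).det := hpd0.det_pos
  have hcont : Continuous fun s : ℝ => (MmM d p cf s).det := (Mm_continuous cf).matrix_det
  have hev : ∀ᶠ s : ℝ in nhds 0, 0 < (MmM d p cf s).det :=
    (hcont.tendsto 0).eventually (eventually_gt_nhds hdet0)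
  rw [Metric.eventually_nhds_iff] at hev
  obtain ⟨δ, hδpos, hδ⟩ := hev
  set s₀ : ℝ := min δ 1 with hs₀def
  have hs₀pos : 0 < s₀ := lt_min hδpos one_pos
  set B : ℝ := ∑ T : MIdx d p, ∑ T' : MIdx d p, ∑ k : Fin (p+1), ∑ k' : Fin (p+1),
    |cf k * cf k'| * |ENv d 1 (k:ℕ) (k':ℕ) T.toFun T'.toFun| with hBdef
  have hBnn : 0 ≤ B := by
    rw [hBdef]
    refine Finset.sum_nonneg fun _ _ => Finset.sum_nonneg fun _ _ =>
      Finset.sum_nonneg fun _ _ => Finset.sum_nonneg fun _ _ =>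
        mul_nonneg (abs_nonneg _) (abs_nonneg _)
  refine ⟨(B+1)⁻¹, inv_pos.mpr (by linarith), s₀^2, pow_pos hs₀pos 2, fun ε hε hεlt => ?_⟩
  set s : ℝ := Real.sqrt ε with hsdef
  have hspos : 0 < s := Real.sqrt_pos.mpr hε
  have hs2 : s * s = ε := Real.mul_self_sqrt hε.le
  have hslt : s < s₀ := by
    have h2 : s^2 < s₀^2 := by rw [sq, hs2]; exact hεlt
    nlinarith
  have hs1 : s ≤ 1 := le_of_lt (lt_of_lt_of_le hslt (min_le_right δ 1))
  have hsδ : s < δ := lt_of_lt_of_le hslt (min_le_left δ 1)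
  have hdets : 0 < (MmM d p cf s).det := by
    apply hδ
    rw [Real.dist_eq, sub_zero, abs_of_pos hspos]
    exact hsδ
  have hMpd : (MmM d p cf s).PosDef := posDef_of_posSemidef_det (Mm_posSemidef cf s) hdets.ne'
  set Dg : Matrix (MIdx d p) (MIdx d p) ℝ :=
    Matrix.diagonal (fun T : MIdx d p => s ^ (∑ i, T.toFun i)) with hDg
  have hPhi : PhiMat d p σ ε = Dg * MmM d p cf s * Dg := by
    ext T T'
    have hentry : (Dg * MmM d p cf s * Dg) T T'
        = s ^ (∑ i, T.toFun i) * MmM d p cf s T T' * s ^ (∑ i, T'.toFun i) := by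
      rw [hDg, Matrix.mul_diagonal, Matrix.diagonal_mul]
    rw [hentry, Phi_Mm σ cf hσ hε T T', pow_add]
    ring
  have hdetDg : Dg.det ≠ 0 := by
    rw [hDg, Matrix.det_diagonal]
    exact Finset.prod_ne_zero_iff.mpr fun T _ => pow_ne_zero _ hspos.ne'
  have hdetPhi : IsUnit (PhiMat d p σ ε).det := by
    rw [hPhi, Matrix.det_mul, Matrix.det_mul]
    exact isUnit_iff_ne_zero.mpr (mul_ne_zero (mul_ne_zero hdetDg hdets.ne') hdetDg)
  refine ⟨hdetPhi, ?_⟩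
  have hB1 : (((B+1)⁻¹⁻¹ • (1 : Matrix (MIdx d p) (MIdx d p) ℝ)) - MmM d p cf s).PosSemidef := by
    rw [inv_inv]
    refine smul_one_sub_psd_of_bound (MmM d p cf s) (Mm_posSemidef cf s).1
      (fun T T' => ∑ k : Fin (p+1), ∑ k' : Fin (p+1),
        |cf k * cf k'| * |ENv d 1 (k:ℕ) (k':ℕ) T.toFun T'.toFun|)
      (fun T T' => Mm_entry_bound cf hspos.le hs1 T T') ?_
    rw [← hBdef]
    linarith
  have hinner : ((MmM d p cf s)⁻¹ - (B+1)⁻¹ • (1 : Matrix (MIdx d p) (MIdx d p) ℝ)).PosSemidef :=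
    inv_sub_smul_posSemidef hMpd (inv_pos.mpr (by linarith)) hB1
  set Dg' : Matrix (MIdx d p) (MIdx d p) ℝ :=
    Matrix.diagonal (fun T : MIdx d p => (s ^ (∑ i, T.toFun i))⁻¹) with hDg'
  have hDginv : Dg⁻¹ = Dg' := by
    refine Matrix.inv_eq_right_inv ?_
    rw [hDg, hDg', Matrix.diagonal_mul_diagonal]
    rw [show (fun T : MIdx d p => s ^ (∑ i, T.toFun i) * (s ^ (∑ i, T.toFun i))⁻¹)
        = fun _ => (1:ℝ) from funext fun T => mul_inv_cancel₀ (pow_ne_zero _ hspos.ne')]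
    exact Matrix.diagonal_one
  have hPhiInv : (PhiMat d p σ ε)⁻¹ = Dg' * (MmM d p cf s)⁻¹ * Dg' := by
    rw [hPhi, Matrix.mul_inv_rev, Matrix.mul_inv_rev, hDginv, Matrix.mul_assoc]
  have hgoal_eq : (PhiMat d p σ ε)⁻¹ -
        (B+1)⁻¹ • Matrix.diagonal (fun T : MIdx d p => (ε ^ (∑ i, (T.1 i : ℕ)))⁻¹)
      = Dg' * ((MmM d p cf s)⁻¹ - (B+1)⁻¹ • (1 : Matrix (MIdx d p) (MIdx d p) ℝ)) * Dg' := by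
    rw [Matrix.mul_sub, Matrix.sub_mul, hPhiInv]
    congr 1
    rw [Matrix.mul_smul, Matrix.mul_one, Matrix.smul_mul]
    congr 1
    rw [hDg', Matrix.diagonal_mul_diagonal]
    refine congrArg Matrix.diagonal (funext fun T => ?_)
    rw [← mul_inv, ← mul_pow, hs2]
    rfl
  rw [hgoal_eq]
  have hconj := hinner.mul_mul_conjTranspose_same (B := Dg')
  have hDg'h : Dg'.conjTranspose = Dg' := by
    rw [hDg', Matrix.diagonal_conjTranspose]
    congr 1
  rwa [hDg'h] at hconj

end
end

section
/- Fix integers d ≥ 1 and p ≥ 1 and let σ satisfy Assumption A. If f ∈ Π_p(ℝ^d) satisfies ∫_{ℝ^d} f(x) σ(⟨w,x⟩ + b) dγ_d(x) = 0 for every w ∈ ℝ^d and every b ∈ ℝ, then f = 0. -/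
open MeasureTheory ProbabilityTheory

lemma aux_integrable_pow_mul_exp_neg_sq (n : ℕ) {b : ℝ} (hb : 0 < b) :
    Integrable (fun x : ℝ => x ^ n * Real.exp (-b * x ^ 2)) := by
  have h1 : Integrable (fun x : ℝ => Real.exp (-b * x ^ 2)) := integrable_exp_neg_mul_sq hb
  have h2 : Integrable (fun x : ℝ => Real.exp (-(b/2) * x ^ 2)) :=
    integrable_exp_neg_mul_sq (by linarith)
  have hb2 : (0:ℝ) < (b/2)^n := pow_pos (by linarith) n
  refine (h1.add ((h2.const_mul (n.factorial / (b/2)^n)))).mono' ?_ ?_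
  · exact ((continuous_pow n).mul (Real.continuous_exp.comp (continuous_const.mul (continuous_pow 2)))).aestronglyMeasurable
  · filter_upwards with x
    have hnn : 0 ≤ (n.factorial / (b/2)^n : ℝ) * Real.exp (-(b/2) * x ^ 2) := by positivity
    simp only [Pi.add_apply]
    rw [norm_mul, Real.norm_eq_abs, Real.norm_eq_abs, abs_pow, Real.abs_exp]
    rcases le_total (|x|) 1 with h | h
    · have h1' : |x| ^ n ≤ 1 := pow_le_one₀ (abs_nonneg x) h
      nlinarith [Real.exp_pos (-b * x ^ 2)]
    · have hA : |x| ^ n ≤ (x ^ 2) ^ n := by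
        rw [← sq_abs, ← pow_mul]
        exact pow_le_pow_right₀ h (by omega)
      have hkey : ((b/2) * x ^ 2) ^ n / n.factorial ≤ Real.exp ((b/2) * x ^ 2) := by
        refine le_trans ?_ (Real.sum_le_exp_of_nonneg (by positivity) (n+1))
        exact Finset.single_le_sum (f := fun i => ((b/2) * x ^ 2) ^ i / i.factorial)
          (fun i _ => by positivity) (Finset.self_mem_range_succ n)
      have hkey' : (b/2)^n * (x^2)^n ≤ Real.exp ((b/2)*x^2) * n.factorial := by
        rw [mul_pow] at hkey
        exact (div_le_iff₀ (by positivity)).mp hkey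
      have hB : (x ^ 2) ^ n ≤ (n.factorial / (b/2)^n) * Real.exp ((b/2) * x ^ 2) := by
        rw [div_mul_eq_mul_div, le_div_iff₀ hb2]
        nlinarith [hkey']
      have hC : |x| ^ n * Real.exp (-b * x ^ 2)
          ≤ (n.factorial / (b/2)^n) * Real.exp ((b/2) * x ^ 2) * Real.exp (-b * x ^ 2) :=
        mul_le_mul_of_nonneg_right (hA.trans hB) (Real.exp_pos _).le
      have hD : Real.exp ((b/2) * x ^ 2) * Real.exp (-b * x ^ 2) = Real.exp (-(b/2) * x ^ 2) := by
        rw [← Real.exp_add]; ring_nf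
      have hC' : |x| ^ n * Real.exp (-b * x ^ 2)
          ≤ (n.factorial / (b/2)^n) * Real.exp (-(b/2) * x ^ 2) :=
        hC.trans_eq (by rw [mul_assoc, hD])
      linarith [Real.exp_pos (-b * x ^ 2)]

lemma aux_integrable_pow_gaussian (n : ℕ) :
    Integrable (fun x : ℝ => x ^ n) (gaussianReal 0 1) := by
  rw [gaussianReal_of_var_ne_zero 0 one_ne_zero,
    integrable_withDensity_iff (measurable_gaussianPDF 0 1)
      (Filter.Eventually.of_forall fun x => ENNReal.ofReal_lt_top)]
  have h : ∀ x : ℝ, ((gaussianPDF 0 1 x).toReal)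
      = (Real.sqrt (2 * Real.pi))⁻¹ * Real.exp (-(1/2) * x ^ 2) := by
    intro x
    rw [gaussianPDF, ENNReal.toReal_ofReal (gaussianPDFReal_nonneg _ _ _), gaussianPDFReal]
    push_cast
    norm_num
    left; ring
  simp_rw [h]
  have := (aux_integrable_pow_mul_exp_neg_sq n (by norm_num : (0:ℝ) < 1/2)).const_mul
    (Real.sqrt (2 * Real.pi))⁻¹
  convert this using 2 with x
  · rfl
  · ring

lemma aux_integrable_monomial (d : ℕ) (β : Fin d → ℕ) :
    Integrable (fun x : Fin d → ℝ => ∏ i, x i ^ β i) (gaussD d) := by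
  letI : MeasureSpace ℝ := ⟨gaussianReal 0 1⟩
  haveI : SigmaFinite (volume : Measure ℝ) := inferInstanceAs (SigmaFinite (gaussianReal 0 1))
  exact Integrable.fintype_prod (𝕜 := ℝ) (f := fun i (x:ℝ) => x ^ β i)
    (fun i => aux_integrable_pow_gaussian (β i))

lemma aux_integrable_poly (d : ℕ) (Q : MvPolynomial (Fin d) ℝ) :
    Integrable (fun x => MvPolynomial.eval x Q) (gaussD d) := by
  have h : ∀ x : Fin d → ℝ,
      MvPolynomial.eval x Q = ∑ α ∈ Q.support, MvPolynomial.coeff α Q * ∏ i, x i ^ α i :=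
    fun x => MvPolynomial.eval_eq' x Q
  simp_rw [h]
  exact integrable_finset_sum _ fun α _ => (aux_integrable_monomial d ⇑α).const_mul _

lemma aux_integrable_F_mono (d : ℕ) (F : MvPolynomial (Fin d) ℝ) (β : Fin d → ℕ) :
    Integrable (fun x : Fin d → ℝ => MvPolynomial.eval x F * ∏ i, x i ^ β i) (gaussD d) := by
  have h : (fun x : Fin d → ℝ => MvPolynomial.eval x F * ∏ i, x i ^ β i)
      = fun x => MvPolynomial.eval x (F * ∏ i, MvPolynomial.X i ^ β i) := by
    funext x; simp
  rw [h]; exact aux_integrable_poly d _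

noncomputable def mom (d : ℕ) (F : MvPolynomial (Fin d) ℝ) (β : Fin d → ℕ) : ℝ :=
  ∫ x, MvPolynomial.eval x F * ∏ i, x i ^ β i ∂(gaussD d)

lemma aux_key (d p : ℕ) (cf : Fin (p+1) → ℝ) (F : MvPolynomial (Fin d) ℝ)
    (σ : ℝ → ℝ) (hσ : ∀ y, σ y = ∑ k : Fin (p + 1), cf k * y ^ (k : ℕ))
    (w : Fin d → ℝ) (b : ℝ) :
    ∫ x, MvPolynomial.eval x F * σ (∑ i, w i * x i + b) ∂(gaussD d)
    = ∑ k : Fin (p+1), ∑ k' ∈ Finset.piAntidiag (Finset.univ : Finset (Option (Fin d))) (k:ℕ),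
        (cf k * ((Nat.multinomial Finset.univ k' : ℝ) * ((∏ i, w i ^ k' (some i)) * b ^ k' none)))
          * mom d F (fun i => k' (some i)) := by
  have e3 : ∀ x : Fin d → ℝ, MvPolynomial.eval x F * σ (∑ i, w i * x i + b)
      = ∑ k : Fin (p+1), ∑ k' ∈ Finset.piAntidiag (Finset.univ : Finset (Option (Fin d))) (k:ℕ),
          (cf k * ((Nat.multinomial Finset.univ k' : ℝ) * ((∏ i, w i ^ k' (some i)) * b ^ k' none)))
            * (MvPolynomial.eval x F * ∏ i, x i ^ k' (some i)) := by
    intro x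
    rw [hσ, Finset.mul_sum]
    refine Finset.sum_congr rfl fun k _ => ?_
    have hy : (∑ i, w i * x i + b) = ∑ o : Option (Fin d), o.elim b (fun i => w i * x i) := by
      rw [Fintype.sum_option]; exact (add_comm _ _)
    have hpow : (∑ i, w i * x i + b) ^ (k:ℕ)
        = ∑ k' ∈ Finset.piAntidiag (Finset.univ : Finset (Option (Fin d))) (k:ℕ),
            (Nat.multinomial Finset.univ k' : ℝ)
              * ∏ o : Option (Fin d), (o.elim b (fun i => w i * x i)) ^ k' o := by
      rw [hy, Finset.sum_pow_eq_sum_piAntidiag]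
    rw [hpow, Finset.mul_sum, Finset.mul_sum]
    refine Finset.sum_congr rfl fun k' _ => ?_
    rw [Fintype.prod_option]
    simp only [Option.elim_none, Option.elim_some]
    simp_rw [mul_pow]
    rw [Finset.prod_mul_distrib]
    ring
  simp_rw [e3]
  rw [integral_finset_sum _ (fun k _ => integrable_finset_sum _
    (fun k' _ => (aux_integrable_F_mono d F _).const_mul _))]
  refine Finset.sum_congr rfl fun k _ => ?_
  rw [integral_finset_sum _ (fun k' _ => (aux_integrable_F_mono d F _).const_mul _)]
  exact Finset.sum_congr rfl fun k' _ => integral_const_mul _ _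

lemma aux_mom_zero (d p : ℕ) (cf : Fin (p+1) → ℝ) (hcf : cf (Fin.last p) ≠ 0)
    (F : MvPolynomial (Fin d) ℝ)
    (hzero : ∀ (w : Fin d → ℝ) (b : ℝ),
      (∑ k : Fin (p+1), ∑ k' ∈ Finset.piAntidiag (Finset.univ : Finset (Option (Fin d))) (k:ℕ),
        (cf k * ((Nat.multinomial Finset.univ k' : ℝ) * ((∏ i, w i ^ k' (some i)) * b ^ k' none)))
          * mom d F (fun i => k' (some i))) = 0)
    (β : Fin d → ℕ) (hβ : ∑ i, β i ≤ p) : mom d F β = 0 := by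
  classical
  set H : MvPolynomial (Option (Fin d)) ℝ :=
    ∑ k : Fin (p+1), ∑ k' ∈ Finset.piAntidiag (Finset.univ : Finset (Option (Fin d))) (k:ℕ),
      MvPolynomial.monomial (Finsupp.equivFunOnFinite.symm k')
        (cf k * ((Nat.multinomial Finset.univ k' : ℝ) * mom d F (fun i => k' (some i)))) with hHdef
  have hHeval : ∀ v : Option (Fin d) → ℝ, MvPolynomial.eval v H = 0 := by
    intro v
    rw [hHdef]
    simp only [map_sum, MvPolynomial.eval_monomial]
    have := hzero (fun i => v (some i)) (v none)
    rw [← this]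
    refine Finset.sum_congr rfl fun k _ => Finset.sum_congr rfl fun k' _ => ?_
    rw [Finsupp.prod_fintype _ _ (fun o => pow_zero _)]
    simp only [Finsupp.coe_equivFunOnFinite_symm]
    rw [Fintype.prod_option]
    ring
  have hH : H = 0 := MvPolynomial.funext fun v => by rw [hHeval, map_zero]
  set k0 : Option (Fin d) → ℕ := fun o => o.elim (p - ∑ i, β i) β with hk0def
  have hk0sum : ∑ o : Option (Fin d), k0 o = p := by
    rw [Fintype.sum_option]
    simp only [hk0def, Option.elim_none, Option.elim_some]
    omega
  have hc := congrArg (MvPolynomial.coeff (Finsupp.equivFunOnFinite.symm k0)) hH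
  rw [hHdef] at hc
  simp only [MvPolynomial.coeff_sum, MvPolynomial.coeff_monomial, MvPolynomial.coeff_zero,
    EmbeddingLike.apply_eq_iff_eq, Finset.sum_ite_eq'] at hc
  have hmem : ∀ k : Fin (p+1),
      (k0 ∈ Finset.piAntidiag (Finset.univ : Finset (Option (Fin d))) (k:ℕ)) ↔ ((k:ℕ) = p) := by
    intro k
    rw [Finset.mem_piAntidiag]
    constructor
    · rintro ⟨h1, -⟩; rw [← h1, hk0sum]
    · intro h; exact ⟨by rw [hk0sum, h], fun i _ => Finset.mem_univ i⟩
  rw [Finset.sum_eq_single (Fin.last p)] at hc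
  · rw [if_pos ((hmem _).mpr (Fin.val_last p))] at hc
    have hβeq : (fun i => k0 (some i)) = β := rfl
    rw [hβeq] at hc
    rcases mul_eq_zero.mp hc with h | h
    · exact absurd h hcf
    · rcases mul_eq_zero.mp h with h2 | h2
      · exact absurd h2 (Nat.cast_ne_zero.mpr (Nat.multinomial_pos _ _).ne')
      · exact h2
  · intro k _ hk
    rw [if_neg]
    rw [hmem]
    intro hkp
    exact hk (Fin.ext (by rw [hkp, Fin.val_last]))
  · intro h; exact absurd (Finset.mem_univ _) h

/-- under Assumption A, if `f ∈ Π_p(ℝ^d)` is `L²(γ_d)`-orthogonal to all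
random features `x ↦ σ(⟨w,x⟩ + b)`, then `f = 0`. -/
theorem stmt9 (d p : ℕ) (hd : 1 ≤ d) (hp : 1 ≤ p)
    (σ : ℝ → ℝ) (cf : Fin (p + 1) → ℝ) (hcf : ∀ k, cf k ≠ 0)
    (hσ : ∀ y, σ y = ∑ k : Fin (p + 1), cf k * y ^ (k : ℕ))
    (F : MvPolynomial (Fin d) ℝ) (hF : F.totalDegree ≤ p)
    (horth : ∀ (w : Fin d → ℝ) (b : ℝ),
      ∫ x, MvPolynomial.eval x F * σ (∑ i, w i * x i + b) ∂(gaussD d) = 0) :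
    F = 0 := by
  have hzero : ∀ (w : Fin d → ℝ) (b : ℝ),
      (∑ k : Fin (p+1), ∑ k' ∈ Finset.piAntidiag (Finset.univ : Finset (Option (Fin d))) (k:ℕ),
        (cf k * ((Nat.multinomial Finset.univ k' : ℝ) * ((∏ i, w i ^ k' (some i)) * b ^ k' none)))
          * mom d F (fun i => k' (some i))) = 0 := by
    intro w b
    rw [← aux_key d p cf F σ hσ w b]
    exact horth w b
  have hmom : ∀ β : Fin d → ℕ, ∑ i, β i ≤ p → mom d F β = 0 :=
    aux_mom_zero d p cf (hcf _) F hzero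
  -- ∫ F² = 0
  have hsq : ∫ x, MvPolynomial.eval x F * MvPolynomial.eval x F ∂(gaussD d) = 0 := by
    have e : ∀ x : Fin d → ℝ, MvPolynomial.eval x F * MvPolynomial.eval x F
        = ∑ α ∈ F.support, MvPolynomial.coeff α F
            * (MvPolynomial.eval x F * ∏ i, x i ^ α i) := by
      intro x
      conv_lhs => rw [show MvPolynomial.eval x F * MvPolynomial.eval x F
        = (∑ α ∈ F.support, MvPolynomial.coeff α F * ∏ i, x i ^ α i) * MvPolynomial.eval x F by
          rw [← MvPolynomial.eval_eq']]
      rw [Finset.sum_mul]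
      exact Finset.sum_congr rfl fun α _ => by ring
    simp_rw [e]
    rw [integral_finset_sum _ (fun α _ => (aux_integrable_F_mono d F (fun i => α i)).const_mul _)]
    refine Finset.sum_eq_zero fun α hα => ?_
    rw [integral_const_mul]
    have hdeg : ∑ i, α i ≤ p := by
      have h1 := MvPolynomial.le_totalDegree hα
      have h2 : α.sum (fun _ e => e) = ∑ i, α i := Finsupp.sum_fintype _ _ (fun i => rfl)
      omega
    rw [show (∫ x, MvPolynomial.eval x F * ∏ i, x i ^ α i ∂(gaussD d)) = mom d F ⇑α from rfl,
      hmom ⇑α hdeg, mul_zero]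
  have hint : Integrable (fun x => MvPolynomial.eval x F * MvPolynomial.eval x F) (gaussD d) := by
    have h : (fun x : Fin d → ℝ => MvPolynomial.eval x F * MvPolynomial.eval x F)
        = fun x => MvPolynomial.eval x (F * F) := by funext x; simp
    rw [h]; exact aux_integrable_poly d _
  have hae : (fun x : Fin d → ℝ => MvPolynomial.eval x F * MvPolynomial.eval x F)
      =ᵐ[gaussD d] 0 :=
    (integral_eq_zero_iff_of_nonneg (fun x => mul_self_nonneg _) hint).mp hsq
  haveI hop : (gaussianReal 0 1 : Measure ℝ).IsOpenPosMeasure := by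
    refine ⟨fun U hU hne h0 => ?_⟩
    have hv : (volume : Measure ℝ) U = 0 := gaussianReal_absolutelyContinuous' 0 one_ne_zero h0
    exact hU.measure_ne_zero volume hne hv
  haveI : (gaussD d).IsOpenPosMeasure :=
    inferInstanceAs ((Measure.pi fun _ : Fin d => gaussianReal 0 1).IsOpenPosMeasure)
  have hfun : (fun x : Fin d → ℝ => MvPolynomial.eval x F * MvPolynomial.eval x F) = 0 :=
    (Continuous.ae_eq_iff_eq (μ := gaussD d)
      ((F.continuous_eval).mul F.continuous_eval) continuous_const).mp hae
  apply MvPolynomial.funext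
  intro x
  rw [map_zero]
  exact mul_self_eq_zero.mp (congrFun hfun x)
end

section
/- Let d ≥ 1, let (A_n)_{n≥1} be a sequence of real d×d matrices converging entrywise to a matrix A, and assume each A_n and A are positive definite, i.e. xᵀA_n x > 0 and xᵀA x > 0 for all nonzero x ∈ ℝ^d. Let S be a nonempty affine subspace of ℝ^d. Then for each n the function x ↦ xᵀA_n x attains a unique minimizer y_n over S, the function x ↦ xᵀA x attains a unique minimizer y over S, and y_n → y as n → ∞. -/
/-!
If `y` minimizes `q x = xᵀ M x` over an affine subspace `S`, the linear term of `t ↦ q (y + t v)`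
vanishes for every direction `v` of `S`, so `q x = q y + q (x - y)` on `S`. With `q` positive
definite this gives uniqueness, and compactness of the unit sphere gives `c ‖x‖² ≤ q x`, hence
coercivity and existence. Adding the splitting for `A` at `y` to the one for `Aₙ` at `yₙ` yields
`c ‖yₙ - y‖ ≤ εₙ (‖yₙ‖ + ‖y‖)`, where `εₙ` is the entrywise `ℓ¹` distance from `Aₙ` to `A`;
hence `yₙ → y`.
-/

open Matrix Filter Topology

namespace Matrix

variable {n : Type*} [Fintype n]

theorem continuous_dotProduct_mulVec_self (M : Matrix n n ℝ) :
    Continuous fun x : n → ℝ => x ⬝ᵥ (M *ᵥ x) := by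
  fun_prop

theorem dotProduct_mulVec_add_smul_self (M : Matrix n n ℝ) (y v : n → ℝ) (t : ℝ) :
    (t • v + y) ⬝ᵥ (M *ᵥ (t • v + y)) =
      y ⬝ᵥ (M *ᵥ y) + t * (y ⬝ᵥ (M *ᵥ v) + v ⬝ᵥ (M *ᵥ y)) + t ^ 2 * (v ⬝ᵥ (M *ᵥ v)) := by
  simp only [mulVec_add, mulVec_smul, dotProduct_add, add_dotProduct, dotProduct_smul,
    smul_dotProduct, smul_eq_mul]
  ring

theorem dotProduct_mulVec_smul_self (M : Matrix n n ℝ) (x : n → ℝ) (t : ℝ) :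
    (t • x) ⬝ᵥ (M *ᵥ (t • x)) = t ^ 2 * (x ⬝ᵥ (M *ᵥ x)) := by
  simp only [mulVec_smul, dotProduct_smul, smul_dotProduct, smul_eq_mul]
  ring

theorem exists_pos_mul_sq_norm_le_dotProduct_mulVec_self (M : Matrix n n ℝ)
    (hM : ∀ x : n → ℝ, x ≠ 0 → 0 < x ⬝ᵥ (M *ᵥ x)) :
    ∃ c > 0, ∀ x : n → ℝ, c * ‖x‖ ^ 2 ≤ x ⬝ᵥ (M *ᵥ x) := by
  rcases subsingleton_or_nontrivial (n → ℝ) with _ | _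
  · exact ⟨1, one_pos, fun x => by simp [Subsingleton.elim x 0]⟩
  obtain ⟨u, hu, hmin⟩ := (isCompact_sphere (0 : n → ℝ) 1).exists_isMinOn
    (NormedSpace.sphere_nonempty.2 zero_le_one) (continuous_dotProduct_mulVec_self M).continuousOn
  refine ⟨_, hM u (ne_zero_of_mem_unit_sphere ⟨u, hu⟩), fun x => ?_⟩
  rcases eq_or_ne x 0 with rfl | hx
  · simp
  have hxu : ‖x‖⁻¹ • x ∈ Metric.sphere (0 : n → ℝ) 1 := by
    simpa using norm_smul_inv_norm (𝕜 := ℝ) hx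
  calc u ⬝ᵥ (M *ᵥ u) * ‖x‖ ^ 2 ≤ (‖x‖⁻¹ • x) ⬝ᵥ (M *ᵥ (‖x‖⁻¹ • x)) * ‖x‖ ^ 2 :=
        mul_le_mul_of_nonneg_right (hmin hxu) (by positivity)
    _ = x ⬝ᵥ (M *ᵥ x) := by
        rw [dotProduct_mulVec_smul_self]
        field_simp

theorem tendsto_dotProduct_mulVec_self_cocompact (M : Matrix n n ℝ)
    (hM : ∀ x : n → ℝ, x ≠ 0 → 0 < x ⬝ᵥ (M *ᵥ x)) :
    Tendsto (fun x : n → ℝ => x ⬝ᵥ (M *ᵥ x)) (cocompact _) atTop := by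
  obtain ⟨c, hc, hcoer⟩ := exists_pos_mul_sq_norm_le_dotProduct_mulVec_self M hM
  exact tendsto_atTop_mono hcoer
    (((tendsto_pow_atTop two_ne_zero).comp tendsto_norm_cocompact_atTop).const_mul_atTop hc)

theorem exists_isMinOn_dotProduct_mulVec_self (M : Matrix n n ℝ)
    (hM : ∀ x : n → ℝ, x ≠ 0 → 0 < x ⬝ᵥ (M *ᵥ x)) {s : Set (n → ℝ)} (hs : IsClosed s)
    (hne : s.Nonempty) : ∃ y ∈ s, IsMinOn (fun x => x ⬝ᵥ (M *ᵥ x)) s y :=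
  let ⟨_, hp⟩ := hne
  (continuous_dotProduct_mulVec_self M).continuousOn.exists_isMinOn' hs hp
    (((tendsto_dotProduct_mulVec_self_cocompact M hM).eventually_ge_atTop _).filter_mono
      inf_le_left)

theorem dotProduct_mulVec_self_eq_of_isMinOn (M : Matrix n n ℝ) {S : AffineSubspace ℝ (n → ℝ)}
    {x y : n → ℝ} (hy : y ∈ S) (hmin : IsMinOn (fun x => x ⬝ᵥ (M *ᵥ x)) S y) (hx : x ∈ S) :
    x ⬝ᵥ (M *ᵥ x) = y ⬝ᵥ (M *ᵥ y) + (x - y) ⬝ᵥ (M *ᵥ (x - y)) := by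
  set v := x - y
  set L := y ⬝ᵥ (M *ᵥ v) + v ⬝ᵥ (M *ᵥ y) with hLdef
  have hquad : ∀ t : ℝ, 0 ≤ v ⬝ᵥ (M *ᵥ v) * (t * t) + L * t + 0 := fun t => by
    have := isMinOn_iff.1 hmin _ (S.smul_vsub_vadd_mem t hx hy hy)
    rw [vsub_eq_sub, vadd_eq_add, dotProduct_mulVec_add_smul_self] at this
    nlinarith
  have hL : L = 0 := by
    have := discrim_le_zero hquad
    rw [discrim] at this
    nlinarith [sq_nonneg L]
  have := dotProduct_mulVec_add_smul_self M y v 1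
  rw [one_smul, sub_add_cancel, ← hLdef, hL] at this
  linarith

theorem eq_of_isMinOn_dotProduct_mulVec_self (M : Matrix n n ℝ)
    (hM : ∀ x : n → ℝ, x ≠ 0 → 0 < x ⬝ᵥ (M *ᵥ x)) {S : AffineSubspace ℝ (n → ℝ)}
    {y z : n → ℝ} (hy : y ∈ S) (hymin : IsMinOn (fun x => x ⬝ᵥ (M *ᵥ x)) S y) (hz : z ∈ S)
    (hzmin : IsMinOn (fun x => x ⬝ᵥ (M *ᵥ x)) S z) : z = y := by
  by_contra hne
  have hsplit := dotProduct_mulVec_self_eq_of_isMinOn M hy hymin hz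
  have hpos := hM (z - y) (sub_ne_zero.2 hne)
  have hle := isMinOn_iff.1 hzmin y hy
  linarith

theorem abs_dotProduct_mulVec_le (D : Matrix n n ℝ) (x y : n → ℝ) :
    |x ⬝ᵥ (D *ᵥ y)| ≤ (∑ i, ∑ j, |D i j|) * (‖x‖ * ‖y‖) := by
  have hexp : x ⬝ᵥ (D *ᵥ y) = ∑ i, ∑ j, x i * (D i j * y j) := by
    simp only [dotProduct, mulVec, Finset.mul_sum]
  calc |x ⬝ᵥ (D *ᵥ y)| ≤ ∑ i, ∑ j, |x i * (D i j * y j)| := by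
        rw [hexp]
        exact (Finset.abs_sum_le_sum_abs _ _).trans
          (Finset.sum_le_sum fun i _ => Finset.abs_sum_le_sum_abs _ _)
    _ ≤ ∑ i, ∑ j, |D i j| * (‖x‖ * ‖y‖) := by
        gcongr with i _ j _
        rw [abs_mul, abs_mul, mul_left_comm]
        gcongr <;> exact (Real.norm_eq_abs _).ge.trans (norm_le_pi_norm _ _)
    _ = (∑ i, ∑ j, |D i j|) * (‖x‖ * ‖y‖) := by simp only [Finset.sum_mul]

theorem mul_norm_sub_le_of_isMinOn {M N : Matrix n n ℝ} {c : ℝ}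
    (hM : ∀ x : n → ℝ, c * ‖x‖ ^ 2 ≤ x ⬝ᵥ (M *ᵥ x)) (hN : ∀ x : n → ℝ, 0 ≤ x ⬝ᵥ (N *ᵥ x))
    {S : AffineSubspace ℝ (n → ℝ)} {y Y : n → ℝ}
    (hy : y ∈ S) (hymin : IsMinOn (fun x => x ⬝ᵥ (M *ᵥ x)) S y)
    (hY : Y ∈ S) (hYmin : IsMinOn (fun x => x ⬝ᵥ (N *ᵥ x)) S Y) :
    c * ‖Y - y‖ ≤ (∑ i, ∑ j, |(M - N) i j|) * (‖Y‖ + ‖y‖) := by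
  set e := Y - y
  have hsplitM := dotProduct_mulVec_self_eq_of_isMinOn M hy hymin hY
  have hsplitN := dotProduct_mulVec_self_eq_of_isMinOn N hY hYmin hy
  have hneg : (y - Y) ⬝ᵥ (N *ᵥ (y - Y)) = e ⬝ᵥ (N *ᵥ e) := by
    rw [← neg_sub, mulVec_neg, neg_dotProduct, dotProduct_neg, neg_neg]
  have hcross : e ⬝ᵥ (M *ᵥ e) + e ⬝ᵥ (N *ᵥ e) =
      e ⬝ᵥ ((M - N) *ᵥ Y) + y ⬝ᵥ ((M - N) *ᵥ e) := by
    simp only [e, sub_mulVec, mulVec_sub, dotProduct_sub, sub_dotProduct] at hsplitM hsplitN hneg ⊢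
    linarith
  have hbound : c * ‖e‖ ^ 2 ≤ (∑ i, ∑ j, |(M - N) i j|) * (‖Y‖ + ‖y‖) * ‖e‖ := by
    have h1 := abs_dotProduct_mulVec_le (M - N) e Y
    have h2 := abs_dotProduct_mulVec_le (M - N) y e
    have := hM e
    have := hN e
    nlinarith [le_abs_self (e ⬝ᵥ ((M - N) *ᵥ Y)), le_abs_self (y ⬝ᵥ ((M - N) *ᵥ e))]
  rcases (norm_nonneg e).eq_or_lt with he | he
  · rw [← he, mul_zero]
    positivity
  · exact le_of_mul_le_mul_right (by rwa [sq, ← mul_assoc] at hbound) he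

theorem tendsto_of_isMinOn_dotProduct_mulVec_self {ι : Type*} {l : Filter ι}
    {N : ι → Matrix n n ℝ} {M : Matrix n n ℝ} (hNM : Tendsto N l (𝓝 M))
    (hM : ∀ x : n → ℝ, x ≠ 0 → 0 < x ⬝ᵥ (M *ᵥ x)) (hN : ∀ i, ∀ x : n → ℝ, 0 ≤ x ⬝ᵥ (N i *ᵥ x))
    {S : AffineSubspace ℝ (n → ℝ)} {Y : ι → n → ℝ} {y : n → ℝ}
    (hY : ∀ i, Y i ∈ S) (hYmin : ∀ i, IsMinOn (fun x => x ⬝ᵥ (N i *ᵥ x)) S (Y i))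
    (hy : y ∈ S) (hymin : IsMinOn (fun x => x ⬝ᵥ (M *ᵥ x)) S y) :
    Tendsto Y l (𝓝 y) := by
  obtain ⟨c, hc, hcoer⟩ := exists_pos_mul_sq_norm_le_dotProduct_mulVec_self M hM
  set ε := fun i => ∑ j, ∑ k, |(M - N i) j k|
  have hε : Tendsto ε l (𝓝 0) := by
    have hcont : Continuous fun D : Matrix n n ℝ => ∑ j, ∑ k, |(M - D) j k| := by fun_prop
    have h0 : ∑ j, ∑ k, |(M - M) j k| = 0 := by simp
    exact h0 ▸ (hcont.tendsto M).comp hNM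
  have hsmall : ∀ᶠ i in l, c * ‖Y i - y‖ ≤ ε i * (‖Y i - y‖ + 2 * ‖y‖) := by
    refine Eventually.of_forall fun i => (mul_norm_sub_le_of_isMinOn hcoer (hN i) hy hymin
      (hY i) (hYmin i)).trans ?_
    have := norm_sub_norm_le (Y i) y
    have : 0 ≤ ε i := by positivity
    nlinarith
  refine tendsto_iff_norm_sub_tendsto_zero.2 (squeeze_zero' (.of_forall fun _ => norm_nonneg _)
    ((hsmall.and (hε.eventually_le_const (half_pos hc))).mono fun i ⟨h, hεi⟩ => ?_)
    (by simpa using hε.const_mul (4 / c * ‖y‖)))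
  rw [show 4 / c * ‖y‖ * ε i = 4 * ‖y‖ * ε i / c by ring, le_div_iff₀ hc]
  nlinarith [norm_nonneg (Y i - y), norm_nonneg y]

end Matrix

theorem stmt11_general (d : ℕ)
    (A : ℕ → Matrix (Fin d) (Fin d) ℝ) (Alim : Matrix (Fin d) (Fin d) ℝ)
    (hconv : ∀ i j, Tendsto (fun n => A n i j) atTop (nhds (Alim i j)))
    (hposA : ∀ n, ∀ x : Fin d → ℝ, x ≠ 0 → 0 < x ⬝ᵥ (A n *ᵥ x))
    (hposLim : ∀ x : Fin d → ℝ, x ≠ 0 → 0 < x ⬝ᵥ (Alim *ᵥ x))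
    (S : AffineSubspace ℝ (Fin d → ℝ)) (hS : (S : Set (Fin d → ℝ)).Nonempty) :
    ∃ (Y : ℕ → Fin d → ℝ) (y : Fin d → ℝ),
      (∀ n, Y n ∈ S ∧ (∀ x ∈ S, Y n ⬝ᵥ (A n *ᵥ Y n) ≤ x ⬝ᵥ (A n *ᵥ x)) ∧
        (∀ z ∈ S, (∀ x ∈ S, z ⬝ᵥ (A n *ᵥ z) ≤ x ⬝ᵥ (A n *ᵥ x)) → z = Y n)) ∧
      (y ∈ S ∧ (∀ x ∈ S, y ⬝ᵥ (Alim *ᵥ y) ≤ x ⬝ᵥ (Alim *ᵥ x)) ∧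
        (∀ z ∈ S, (∀ x ∈ S, z ⬝ᵥ (Alim *ᵥ z) ≤ x ⬝ᵥ (Alim *ᵥ x)) → z = y)) ∧
      Tendsto Y atTop (nhds y) := by
  have hSclosed : IsClosed (S : Set (Fin d → ℝ)) := S.closed_of_finiteDimensional
  choose Y hYS hYmin using fun n =>
    exists_isMinOn_dotProduct_mulVec_self (A n) (hposA n) hSclosed hS
  obtain ⟨y, hyS, hymin⟩ := exists_isMinOn_dotProduct_mulVec_self Alim hposLim hSclosed hS
  have hA : Tendsto A atTop (𝓝 Alim) :=
    tendsto_pi_nhds.2 fun i => tendsto_pi_nhds.2 (hconv i)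
  have hnonneg : ∀ n, ∀ x : Fin d → ℝ, 0 ≤ x ⬝ᵥ (A n *ᵥ x) := fun n x => by
    rcases eq_or_ne x 0 with rfl | hx
    exacts [by simp, (hposA n x hx).le]
  refine ⟨Y, y, fun n => ⟨hYS n, isMinOn_iff.1 (hYmin n), fun z hz hzmin => ?_⟩,
    ⟨hyS, isMinOn_iff.1 hymin, fun z hz hzmin => ?_⟩,
    tendsto_of_isMinOn_dotProduct_mulVec_self hA hposLim hnonneg hYS hYmin hyS hymin⟩
  · exact eq_of_isMinOn_dotProduct_mulVec_self _ (hposA n) (hYS n) (hYmin n) hz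
      (isMinOn_iff.2 hzmin)
  · exact eq_of_isMinOn_dotProduct_mulVec_self _ hposLim hyS hymin hz (isMinOn_iff.2 hzmin)

/-- if positive definite matrices Aₙ converge entrywise to a positive
definite matrix A, and S is a nonempty affine subspace of ℝ^d, then the quadratic forms
x ↦ xᵀAₙx and x ↦ xᵀAx have unique minimizers yₙ and y over S, and yₙ → y. -/
theorem stmt11 (d : ℕ) (hd : 1 ≤ d)
    (A : ℕ → Matrix (Fin d) (Fin d) ℝ) (Alim : Matrix (Fin d) (Fin d) ℝ)
    (hconv : ∀ i j, Tendsto (fun n => A n i j) atTop (nhds (Alim i j)))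
    (hposA : ∀ n, ∀ x : Fin d → ℝ, x ≠ 0 → 0 < x ⬝ᵥ (A n *ᵥ x))
    (hposLim : ∀ x : Fin d → ℝ, x ≠ 0 → 0 < x ⬝ᵥ (Alim *ᵥ x))
    (S : AffineSubspace ℝ (Fin d → ℝ)) (hS : (S : Set (Fin d → ℝ)).Nonempty) :
    ∃ (Y : ℕ → Fin d → ℝ) (y : Fin d → ℝ),
      (∀ n, Y n ∈ S ∧ (∀ x ∈ S, Y n ⬝ᵥ (A n *ᵥ Y n) ≤ x ⬝ᵥ (A n *ᵥ x)) ∧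
        (∀ z ∈ S, (∀ x ∈ S, z ⬝ᵥ (A n *ᵥ z) ≤ x ⬝ᵥ (A n *ᵥ x)) → z = Y n)) ∧
      (y ∈ S ∧ (∀ x ∈ S, y ⬝ᵥ (Alim *ᵥ y) ≤ x ⬝ᵥ (Alim *ᵥ x)) ∧
        (∀ z ∈ S, (∀ x ∈ S, z ⬝ᵥ (Alim *ᵥ z) ≤ x ⬝ᵥ (Alim *ᵥ x)) → z = y)) ∧
      Tendsto Y atTop (nhds y) :=
  stmt11_general d A Alim hconv hposA hposLim S hS
end

section
/- Let d, k, N ≥ 1 be integers, let U ∈ ℝ^{d×k} satisfy UᵀU = I_k, and set P_∥ = U Uᵀ and P_⊥ = I_d − U Uᵀ. Let x be a random vector in ℝ^d such that P_∥ x and P_⊥ x are independent. Let φ : ℝ^k → ℝ and σ : ℝ → ℝ be measurable, let w_1, …, w_N ∈ ℝ^d, c_1, …, c_N ∈ ℝ and a ∈ ℝ^N, and assume that φ(Uᵀx) and σ(⟨w_i, x⟩ + c_i) for i = 1, …, N are square-integrable. For i = 1, …, N define the smoothed activation σ̄_i(λ) = E[σ(λ + ⟨P_⊥ w_i, P_⊥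 x⟩)], where the expectation is over the distribution of P_⊥ x, and define the matrix Λ ∈ ℝ^{N×N} by Λ_{ij} = E_{P_∥x}[ Cov_{P_⊥x}( σ(⟨w_i,x⟩ + c_i), σ(⟨w_j,x⟩ + c_j) ) ], where for each fixed value of P_∥ x, Cov_{P_⊥x} denotes the covariance with respect to the distribution of P_⊥ x. Then (1/2) E[ (φ(Uᵀx) − Σ_{i=1}^N a_i σ(⟨w_i,x⟩ + c_i))² ] = (1/2) E[ (φ(z) − Σ_{i=1}^N a_i σ̄_i(⟨Uᵀw_i, z⟩ + c_i))² ] + (1/2) aᵀ Λ a, where z = Uᵀ x. -/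
open MeasureTheory ProbabilityTheory Matrix

/-- The smoothed activation `σ̄(λ) = E[σ(λ + ⟨P_⊥ w, P_⊥ x⟩)]`, the expectation being over
the distribution of `P_⊥ x`. -/
noncomputable def smoothedAct {d : ℕ} {Ω : Type*} [MeasurableSpace Ω] (μ : Measure Ω)
    (x : Ω → Fin d → ℝ) (σ : ℝ → ℝ) (Pperp : Matrix (Fin d) (Fin d) ℝ)
    (wi : Fin d → ℝ) (lam : ℝ) : ℝ :=
  ∫ ω', σ (lam + (Pperp *ᵥ wi) ⬝ᵥ (Pperp *ᵥ x ω')) ∂μ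

/-- `Λ_{ij} = E_{P_∥x}[Cov_{P_⊥x}(σ(⟨wᵢ,x⟩+cᵢ), σ(⟨wⱼ,x⟩+cⱼ))]`: since `P_∥x` and `P_⊥x`
are independent, the conditional covariance given `P_∥ x` is expressed by integrating over
a fresh independent copy `ω'` in the `P_⊥` component, writing
`⟨w,x⟩ = ⟨w, P_∥x⟩ + ⟨w, P_⊥x⟩`. -/
noncomputable def lambdaMat {d N : ℕ} {Ω : Type*} [MeasurableSpace Ω] (μ : Measure Ω)
    (x : Ω → Fin d → ℝ) (σ : ℝ → ℝ) (Ppar Pperp : Matrix (Fin d) (Fin d) ℝ)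
    (w : Fin N → Fin d → ℝ) (c : Fin N → ℝ) (i j : Fin N) : ℝ :=
  ∫ ω,
    ((∫ ω', σ (w i ⬝ᵥ (Ppar *ᵥ x ω) + w i ⬝ᵥ (Pperp *ᵥ x ω') + c i) *
              σ (w j ⬝ᵥ (Ppar *ᵥ x ω) + w j ⬝ᵥ (Pperp *ᵥ x ω') + c j) ∂μ)
      - (∫ ω', σ (w i ⬝ᵥ (Ppar *ᵥ x ω) + w i ⬝ᵥ (Pperp *ᵥ x ω') + c i) ∂μ) *
          (∫ ω', σ (w j ⬝ᵥ (Ppar *ᵥ x ω) + w j ⬝ᵥ (Pperp *ᵥ x ω') + c j) ∂μ)) ∂μ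



section helpers
variable {γ : Type*} [MeasurableSpace γ] {ρ : Measure γ}

lemma int_mul_of_sq {u v : γ → ℝ} (hu : AEStronglyMeasurable u ρ) (hv : AEStronglyMeasurable v ρ)
    (hu2 : Integrable (fun x => u x ^ 2) ρ) (hv2 : Integrable (fun x => v x ^ 2) ρ) :
    Integrable (fun x => u x * v x) ρ := by
  refine ((hu2.add hv2).div_const 2).mono' (hu.mul hv) (Filter.Eventually.of_forall fun x => ?_)
  simp only [Pi.add_apply]
  rw [Real.norm_eq_abs, abs_mul]
  nlinarith [sq_nonneg (|u x| - |v x|), sq_abs (u x), sq_abs (v x), abs_nonneg (u x),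
    abs_nonneg (v x)]

lemma sq_integral_le [IsProbabilityMeasure ρ] {u : γ → ℝ} (hu : Integrable u ρ)
    (hu2 : Integrable (fun x => u x ^ 2) ρ) :
    (∫ x, u x ∂ρ) ^ 2 ≤ ∫ x, u x ^ 2 ∂ρ := by
  set m := ∫ x, u x ∂ρ with hm
  have h0 : 0 ≤ ∫ x, (u x - m) ^ 2 ∂ρ := integral_nonneg fun x => sq_nonneg _
  have hexp : ∫ x, (u x - m) ^ 2 ∂ρ = (∫ x, u x ^ 2 ∂ρ) - 2 * m * m + m ^ 2 := by
    have h1 : ∀ x, (u x - m) ^ 2 = (u x ^ 2 - 2 * m * u x) + m ^ 2 := fun x => by ring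
    simp_rw [h1]
    have hI : Integrable (fun x => u x ^ 2 - 2 * m * u x) ρ := hu2.sub (hu.const_mul _)
    rw [integral_add hI (integrable_const _),
      integral_sub hu2 (hu.const_mul (2 * m)), integral_const_mul, integral_const,
      probReal_univ, one_smul, ← hm]
  nlinarith

lemma slice_var {β : Type*} [MeasurableSpace β] (μ2 : Measure β) [IsProbabilityMeasure μ2]
    {N : ℕ} (A : ℝ) (u : Fin N → β → ℝ) (a : Fin N → ℝ)
    (hum : ∀ i, AEStronglyMeasurable (u i) μ2)
    (hu : ∀ i, Integrable (u i) μ2) (hu2 : ∀ i, Integrable (fun q => u i q ^ 2) μ2) :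
    ∫ q, (A - ∑ i, a i * u i q) ^ 2 ∂μ2
      = (A - ∑ i, a i * ∫ q, u i q ∂μ2) ^ 2
        + ∑ i, ∑ j, a i * a j *
            ((∫ q, u i q * u j q ∂μ2) - (∫ q, u i q ∂μ2) * (∫ q, u j q ∂μ2)) := by
  have hmul : ∀ i j, Integrable (fun q => u i q * u j q) μ2 := fun i j =>
    int_mul_of_sq (hum i) (hum j) (hu2 i) (hu2 j)
  have hexp : ∀ q, (A - ∑ i, a i * u i q) ^ 2
      = (A ^ 2 - 2 * A * (∑ i, a i * u i q))
        + ∑ i, ∑ j, (a i * a j) * (u i q * u j q) := by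
    intro q
    have h : (∑ i, a i * u i q) ^ 2 = ∑ i, ∑ j, (a i * a j) * (u i q * u j q) := by
      rw [sq, Finset.sum_mul_sum]
      exact Finset.sum_congr rfl fun i _ => Finset.sum_congr rfl fun j _ => by ring
    rw [sub_sq, h]
  simp_rw [hexp]
  have hS : Integrable (fun q => ∑ i, a i * u i q) μ2 :=
    integrable_finset_sum _ fun i _ => (hu i).const_mul _
  have hT : Integrable (fun q => ∑ i, ∑ j, (a i * a j) * (u i q * u j q)) μ2 :=
    integrable_finset_sum _ fun i _ => integrable_finset_sum _ fun j _ => (hmul i j).const_mul _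
  have hI1 : Integrable (fun q => A ^ 2 - 2 * A * ∑ i, a i * u i q) μ2 :=
    (integrable_const _).sub (hS.const_mul _)
  rw [integral_add hI1 hT, integral_sub (integrable_const _) (hS.const_mul _), integral_const,
    probReal_univ, one_smul, integral_const_mul,
    integral_finset_sum _ (fun i _ => (hu i).const_mul _)]
  have hTi : ∫ q, ∑ i, ∑ j, (a i * a j) * (u i q * u j q) ∂μ2
      = ∑ i, ∑ j, (a i * a j) * ∫ q, u i q * u j q ∂μ2 := by
    rw [integral_finset_sum _ fun i _ =>
      integrable_finset_sum _ fun j _ => (hmul i j).const_mul _]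
    exact Finset.sum_congr rfl fun i _ => by
      rw [integral_finset_sum _ fun j _ => (hmul i j).const_mul _]
      exact Finset.sum_congr rfl fun j _ => integral_const_mul _ _
  rw [hTi]
  simp_rw [integral_const_mul]
  have hm : (∑ i, a i * ∫ q, u i q ∂μ2) ^ 2
      = ∑ i, ∑ j, a i * a j * ((∫ q, u i q ∂μ2) * (∫ q, u j q ∂μ2)) := by
    rw [sq, Finset.sum_mul_sum]
    exact Finset.sum_congr rfl fun i _ => Finset.sum_congr rfl fun j _ => by ring
  have hsplit : ∑ i, ∑ j, a i * a j *
        ((∫ q, u i q * u j q ∂μ2) - (∫ q, u i q ∂μ2) * (∫ q, u j q ∂μ2))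
      = (∑ i, ∑ j, a i * a j * ∫ q, u i q * u j q ∂μ2)
        - ∑ i, ∑ j, a i * a j * ((∫ q, u i q ∂μ2) * (∫ q, u j q ∂μ2)) := by
    simp_rw [mul_sub, Finset.sum_sub_distrib]
  rw [hsplit, sub_sq, hm]
  ring

end helpers

lemma core {α β : Type*} [MeasurableSpace α] [MeasurableSpace β]
    (μ1 : Measure α) (μ2 : Measure β) [IsProbabilityMeasure μ1] [IsProbabilityMeasure μ2]
    {N : ℕ} (Φ : α → ℝ) (f : Fin N → α → β → ℝ) (a : Fin N → ℝ)
    (hΦ : Measurable Φ) (hf : ∀ i, Measurable (fun pq : α × β => f i pq.1 pq.2))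
    (hΦ2 : Integrable (fun p => Φ p ^ 2) μ1)
    (hf2 : ∀ i, Integrable (fun pq : α × β => f i pq.1 pq.2 ^ 2) (μ1.prod μ2)) :
    ∫ pq : α × β, (Φ pq.1 - ∑ i, a i * f i pq.1 pq.2) ^ 2 ∂(μ1.prod μ2)
      = (∫ p, (Φ p - ∑ i, a i * ∫ q, f i p q ∂μ2) ^ 2 ∂μ1)
        + ∑ i, ∑ j, a i * a j *
            ∫ p, ((∫ q, f i p q * f j p q ∂μ2)
              - (∫ q, f i p q ∂μ2) * (∫ q, f j p q ∂μ2)) ∂μ1 := by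
  have hfm : ∀ i, AEStronglyMeasurable (fun pq : α × β => f i pq.1 pq.2) (μ1.prod μ2) :=
    fun i => (hf i).aestronglyMeasurable
  have hone : Integrable (fun _ : α × β => (1 : ℝ) ^ 2) (μ1.prod μ2) := by
    simpa using (integrable_const (1 : ℝ) : Integrable _ (μ1.prod μ2))
  have hfi : ∀ i, Integrable (fun pq : α × β => f i pq.1 pq.2) (μ1.prod μ2) := by
    intro i
    have := int_mul_of_sq (hfm i) aestronglyMeasurable_const (hf2 i) hone
    simpa using this
  have hmulν : ∀ i j,
      Integrable (fun pq : α × β => f i pq.1 pq.2 * f j pq.1 pq.2) (μ1.prod μ2) :=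
    fun i j => int_mul_of_sq (hfm i) (hfm j) (hf2 i) (hf2 j)
  have hΦν2 : Integrable (fun pq : α × β => Φ pq.1 ^ 2) (μ1.prod μ2) := by
    have := hΦ2.mul_prod (integrable_const (μ := μ2) (1 : ℝ))
    simpa using this
  have hΦνm : AEStronglyMeasurable (fun pq : α × β => Φ pq.1) (μ1.prod μ2) :=
    (hΦ.comp measurable_fst).aestronglyMeasurable
  have hSm : Measurable (fun pq : α × β => ∑ i, a i * f i pq.1 pq.2) :=
    Finset.measurable_sum _ fun i _ => (hf i).const_mul _
  have hS2 : Integrable (fun pq : α × β => (∑ i, a i * f i pq.1 pq.2) ^ 2) (μ1.prod μ2) := by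
    have hS2' : Integrable (fun pq : α × β =>
        ∑ i, ∑ j, (a i * a j) * (f i pq.1 pq.2 * f j pq.1 pq.2)) (μ1.prod μ2) :=
      integrable_finset_sum _ fun i _ => integrable_finset_sum _ fun j _ =>
        (hmulν i j).const_mul _
    refine hS2'.congr (Filter.Eventually.of_forall fun pq => ?_)
    show ∑ i, ∑ j, (a i * a j) * (f i pq.1 pq.2 * f j pq.1 pq.2)
      = (∑ i, a i * f i pq.1 pq.2) ^ 2
    rw [sq, Finset.sum_mul_sum]
    exact (Finset.sum_congr rfl fun i _ => Finset.sum_congr rfl fun j _ => by ring).symm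
  have hΦS : Integrable (fun pq : α × β => Φ pq.1 * ∑ i, a i * f i pq.1 pq.2) (μ1.prod μ2) :=
    int_mul_of_sq hΦνm hSm.aestronglyMeasurable hΦν2 hS2
  have hsq : Integrable
      (fun pq : α × β => (Φ pq.1 - ∑ i, a i * f i pq.1 pq.2) ^ 2) (μ1.prod μ2) := by
    refine ((hΦν2.sub (hΦS.const_mul 2)).add hS2).congr (Filter.Eventually.of_forall fun pq => ?_)
    simp only [Pi.add_apply, Pi.sub_apply]
    ring
  rw [integral_prod _ hsq]
  have h1 : ∀ᵐ p ∂μ1, ∀ i, Integrable (fun q => f i p q) μ2 := by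
    rw [ae_all_iff]; exact fun i => (hfi i).prod_right_ae
  have h2 : ∀ᵐ p ∂μ1, ∀ i, Integrable (fun q => f i p q ^ 2) μ2 := by
    rw [ae_all_iff]; exact fun i => (hf2 i).prod_right_ae
  have key : ∀ᵐ p ∂μ1, ∫ q, (Φ p - ∑ i, a i * f i p q) ^ 2 ∂μ2
      = (Φ p - ∑ i, a i * ∫ q, f i p q ∂μ2) ^ 2
        + ∑ i, ∑ j, a i * a j * ((∫ q, f i p q * f j p q ∂μ2)
            - (∫ q, f i p q ∂μ2) * (∫ q, f j p q ∂μ2)) := by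
    filter_upwards [h1, h2] with p hp1 hp2
    exact slice_var μ2 (Φ p) (fun i => f i p) a
      (fun i => ((hf i).comp measurable_prodMk_left).aestronglyMeasurable) hp1 hp2
  rw [integral_congr_ae key]
  have hgm : ∀ i, StronglyMeasurable (fun p => ∫ q, f i p q ∂μ2) := fun i =>
    (hf i).stronglyMeasurable.integral_prod_right'
  have hMint : ∀ i j, Integrable (fun p => ∫ q, f i p q * f j p q ∂μ2) μ1 := fun i j =>
    (hmulν i j).integral_prod_left
  have hggint : ∀ i j,
      Integrable (fun p => (∫ q, f i p q ∂μ2) * (∫ q, f j p q ∂μ2)) μ1 := by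
    intro i j
    refine ((((hf2 i).integral_prod_left.add (hf2 j).integral_prod_left).div_const 2).mono'
      ((hgm i).mul (hgm j)).aestronglyMeasurable ?_)
    filter_upwards [h1, h2] with p hp1 hp2
    have hi := sq_integral_le (hp1 i) (hp2 i)
    have hj := sq_integral_le (hp1 j) (hp2 j)
    rw [Real.norm_eq_abs, abs_mul]
    simp only [Pi.add_apply]
    nlinarith [abs_nonneg (∫ q, f i p q ∂μ2), abs_nonneg (∫ q, f j p q ∂μ2),
      sq_abs (∫ q, f i p q ∂μ2), sq_abs (∫ q, f j p q ∂μ2),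
      sq_nonneg (|∫ q, f i p q ∂μ2| - |∫ q, f j p q ∂μ2|)]
  have hWint : ∀ i j, Integrable (fun p => (∫ q, f i p q * f j p q ∂μ2)
      - (∫ q, f i p q ∂μ2) * (∫ q, f j p q ∂μ2)) μ1 := fun i j =>
    (hMint i j).sub (hggint i j)
  have hVint : Integrable (fun p => ∑ i, ∑ j, a i * a j *
      ((∫ q, f i p q * f j p q ∂μ2) - (∫ q, f i p q ∂μ2) * (∫ q, f j p q ∂μ2))) μ1 :=
    integrable_finset_sum _ fun i _ => integrable_finset_sum _ fun j _ =>
      (hWint i j).const_mul _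
  have hI1int : Integrable (fun p => (Φ p - ∑ i, a i * ∫ q, f i p q ∂μ2) ^ 2) μ1 := by
    have htot : Integrable (fun p => ∫ q, (Φ p - ∑ i, a i * f i p q) ^ 2 ∂μ2) μ1 :=
      hsq.integral_prod_left
    exact ((htot.congr key).sub hVint).congr (Filter.Eventually.of_forall fun p => by
      simp only [Pi.sub_apply]; ring)
  rw [integral_add hI1int hVint]
  congr 1
  rw [integral_finset_sum _ fun i _ => integrable_finset_sum _ fun j _ => (hWint i j).const_mul _]
  refine Finset.sum_congr rfl fun i _ => ?_
  rw [integral_finset_sum _ fun j _ => (hWint i j).const_mul _]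
  exact Finset.sum_congr rfl fun j _ => integral_const_mul _ _

/-- the multi-index model risk decomposition. If `UᵀU = I_k` and the
projections `P_∥ x = U Uᵀ x` and `P_⊥ x = (I − U Uᵀ) x` of the input are independent, then
`(1/2) E[(φ(Uᵀx) − Σᵢ aᵢ σ(⟨wᵢ,x⟩+cᵢ))²]
  = (1/2) E[(φ(z) − Σᵢ aᵢ σ̄ᵢ(⟨Uᵀwᵢ, z⟩+cᵢ))²] + (1/2) aᵀ Λ a`, with `z = Uᵀ x`. -/
theorem stmt12 (d k N : ℕ) (hd : 1 ≤ d) (hk : 1 ≤ k) (hN : 1 ≤ N)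
    (U : Matrix (Fin d) (Fin k) ℝ) (hU : Uᵀ * U = 1)
    {Ω : Type*} [MeasurableSpace Ω] (μ : Measure Ω) [IsProbabilityMeasure μ]
    (x : Ω → Fin d → ℝ) (hx : Measurable x)
    (hindep : IndepFun (fun ω => (U * Uᵀ) *ᵥ x ω)
      (fun ω => ((1 : Matrix (Fin d) (Fin d) ℝ) - U * Uᵀ) *ᵥ x ω) μ)
    (φ : (Fin k → ℝ) → ℝ) (hφ : Measurable φ)
    (σ : ℝ → ℝ) (hσ : Measurable σ)
    (w : Fin N → Fin d → ℝ) (c : Fin N → ℝ) (a : Fin N → ℝ)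
    (hφL2 : MemLp (fun ω => φ (Uᵀ *ᵥ x ω)) 2 μ)
    (hσL2 : ∀ i, MemLp (fun ω => σ (w i ⬝ᵥ x ω + c i)) 2 μ) :
    (1 / 2 : ℝ) * (∫ ω, (φ (Uᵀ *ᵥ x ω) - ∑ i, a i * σ (w i ⬝ᵥ x ω + c i)) ^ 2 ∂μ)
      = (1 / 2 : ℝ) *
          (∫ ω, (φ (Uᵀ *ᵥ x ω)
              - ∑ i, a i * smoothedAct μ x σ (1 - U * Uᵀ) (w i)
                  ((Uᵀ *ᵥ w i) ⬝ᵥ (Uᵀ *ᵥ x ω) + c i)) ^ 2 ∂μ)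
        + (1 / 2 : ℝ) *
            ∑ i, ∑ j, a i * a j * lambdaMat μ x σ (U * Uᵀ) (1 - U * Uᵀ) w c i j := by
  -- matrix algebra
  have hPP : (U * Uᵀ) * (U * Uᵀ) = U * Uᵀ := by
    rw [Matrix.mul_assoc, ← Matrix.mul_assoc Uᵀ U Uᵀ, hU, Matrix.one_mul]
  have hPt : (U * Uᵀ)ᵀ = U * Uᵀ := by
    rw [Matrix.transpose_mul, Matrix.transpose_transpose]
  have hQt : ((1 : Matrix (Fin d) (Fin d) ℝ) - U * Uᵀ)ᵀ = 1 - U * Uᵀ := by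
    rw [Matrix.transpose_sub, Matrix.transpose_one, hPt]
  have hQQ : ((1 : Matrix (Fin d) (Fin d) ℝ) - U * Uᵀ) * (1 - U * Uᵀ) = 1 - U * Uᵀ := by
    calc ((1 : Matrix (Fin d) (Fin d) ℝ) - U * Uᵀ) * (1 - U * Uᵀ)
        = 1 - U * Uᵀ - ((U * Uᵀ) * 1 - (U * Uᵀ) * (U * Uᵀ)) := by
          rw [Matrix.sub_mul, Matrix.one_mul, Matrix.mul_sub]
      _ = 1 - U * Uᵀ := by rw [Matrix.mul_one, hPP]; abel
  have hUt : ∀ v : Fin d → ℝ, Uᵀ *ᵥ ((U * Uᵀ) *ᵥ v) = Uᵀ *ᵥ v := fun v => by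
    rw [Matrix.mulVec_mulVec, ← Matrix.mul_assoc, hU, Matrix.one_mul]
  have hdot1 : ∀ u v : Fin d → ℝ, (Uᵀ *ᵥ u) ⬝ᵥ (Uᵀ *ᵥ v) = u ⬝ᵥ ((U * Uᵀ) *ᵥ v) :=
    fun u v => by
      rw [Matrix.mulVec_transpose, Matrix.dotProduct_mulVec, Matrix.vecMul_vecMul,
        Matrix.dotProduct_mulVec]
  have hdotQ : ∀ u v : Fin d → ℝ,
      (((1 : Matrix (Fin d) (Fin d) ℝ) - U * Uᵀ) *ᵥ u) ⬝ᵥ ((1 - U * Uᵀ) *ᵥ v)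
        = u ⬝ᵥ ((1 - U * Uᵀ) *ᵥ v) := fun u v => by
    have h1 : ((1 : Matrix (Fin d) (Fin d) ℝ) - U * Uᵀ) *ᵥ u = u ᵥ* (1 - U * Uᵀ) := by
      conv_lhs => rw [← hQt]
      exact Matrix.mulVec_transpose _ u
    rw [h1, ← Matrix.dotProduct_mulVec, Matrix.mulVec_mulVec, hQQ]
  have hsplitv : ∀ u v : Fin d → ℝ,
      u ⬝ᵥ v = u ⬝ᵥ ((U * Uᵀ) *ᵥ v) + u ⬝ᵥ (((1 : Matrix (Fin d) (Fin d) ℝ) - U * Uᵀ) *ᵥ v) :=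
    fun u v => by
      rw [← dotProduct_add, ← Matrix.add_mulVec, add_sub_cancel, Matrix.one_mulVec]
  -- measurability of linear maps
  have hmvk : Measurable (fun v : Fin d → ℝ => Uᵀ *ᵥ v) :=
    (Matrix.mulVecLin Uᵀ).continuous_of_finiteDimensional.measurable
  have hmvP : Measurable (fun v : Fin d → ℝ => (U * Uᵀ) *ᵥ v) :=
    (Matrix.mulVecLin (U * Uᵀ)).continuous_of_finiteDimensional.measurable
  have hmvQ : Measurable (fun v : Fin d → ℝ => ((1 : Matrix (Fin d) (Fin d) ℝ) - U * Uᵀ) *ᵥ v) :=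
    (Matrix.mulVecLin ((1 : Matrix (Fin d) (Fin d) ℝ) - U * Uᵀ)).continuous_of_finiteDimensional.measurable
  have hdm : ∀ u : Fin d → ℝ, Measurable (fun v : Fin d → ℝ => u ⬝ᵥ v) := fun u =>
    Finset.measurable_sum _ fun j _ => (measurable_pi_apply j).const_mul _
  -- the two projected processes
  set X : Ω → Fin d → ℝ := fun ω => (U * Uᵀ) *ᵥ x ω with hXdef
  set Y : Ω → Fin d → ℝ := fun ω => ((1 : Matrix (Fin d) (Fin d) ℝ) - U * Uᵀ) *ᵥ x ω with hYdef
  have hXm : Measurable X := hmvP.comp hx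
  have hYm : Measurable Y := hmvQ.comp hx
  have hpair : Measurable fun ω => (X ω, Y ω) := hXm.prodMk hYm
  have hmap : μ.map (fun ω => (X ω, Y ω)) = (μ.map X).prod (μ.map Y) :=
    (indepFun_iff_map_prod_eq_prod_map_map hXm.aemeasurable hYm.aemeasurable).mp hindep
  haveI : IsProbabilityMeasure (μ.map X) := Measure.isProbabilityMeasure_map hXm.aemeasurable
  haveI : IsProbabilityMeasure (μ.map Y) := Measure.isProbabilityMeasure_map hYm.aemeasurable
  -- abstract functions
  set Φ : (Fin d → ℝ) → ℝ := fun p => φ (Uᵀ *ᵥ p) with hΦdef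
  set f : Fin N → (Fin d → ℝ) → (Fin d → ℝ) → ℝ :=
    fun i p q => σ (w i ⬝ᵥ p + w i ⬝ᵥ q + c i) with hfdef
  have hΦm : Measurable Φ := hφ.comp hmvk
  have hfm : ∀ i, Measurable (fun pq : (Fin d → ℝ) × (Fin d → ℝ) => f i pq.1 pq.2) := fun i =>
    hσ.comp ((((hdm (w i)).comp measurable_fst).add
      ((hdm (w i)).comp measurable_snd)).add_const (c i))
  have hfq : ∀ i p, Measurable (fun q => f i p q) := fun i p =>
    (hfm i).comp measurable_prodMk_left
  -- pointwise identities
  have id1 : ∀ ω, φ (Uᵀ *ᵥ x ω) = Φ (X ω) := fun ω => (congrArg φ (hUt (x ω))).symm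
  have id2 : ∀ i ω ω', σ (w i ⬝ᵥ X ω + w i ⬝ᵥ Y ω' + c i)
      = f i (X ω) (Y ω') := fun i ω ω' => rfl
  have id2' : ∀ i ω, σ (w i ⬝ᵥ x ω + c i) = f i (X ω) (Y ω) := fun i ω => by
    rw [hfdef]; simp only [hXdef, hYdef]
    rw [← hsplitv (w i) (x ω)]
  -- transferred integrability
  have hΦ2 : Integrable (fun p => Φ p ^ 2) (μ.map X) := by
    have h0 := hφL2.integrable_sq
    have heq : (fun ω => φ (Uᵀ *ᵥ x ω) ^ 2) = fun ω => Φ (X ω) ^ 2 :=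
      funext fun ω => by rw [id1 ω]
    rw [heq] at h0
    exact (integrable_map_measure ((hΦm.pow_const 2).aestronglyMeasurable)
      hXm.aemeasurable).mpr h0
  have hf2 : ∀ i, Integrable (fun pq : (Fin d → ℝ) × (Fin d → ℝ) => f i pq.1 pq.2 ^ 2)
      ((μ.map X).prod (μ.map Y)) := by
    intro i
    have h0 := (hσL2 i).integrable_sq
    have heq : (fun ω => σ (w i ⬝ᵥ x ω + c i) ^ 2) = fun ω => f i (X ω) (Y ω) ^ 2 :=
      funext fun ω => by rw [id2' i ω]
    rw [heq] at h0
    rw [← hmap]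
    exact (integrable_map_measure (((hfm i).pow_const 2).aestronglyMeasurable)
      hpair.aemeasurable).mpr h0
  -- inner integral conversions
  have hgval : ∀ i ω, smoothedAct μ x σ (1 - U * Uᵀ) (w i)
      ((Uᵀ *ᵥ w i) ⬝ᵥ (Uᵀ *ᵥ x ω) + c i) = ∫ q, f i (X ω) q ∂(μ.map Y) := by
    intro i ω
    rw [smoothedAct, integral_map hYm.aemeasurable (hfq i (X ω)).aestronglyMeasurable]
    refine integral_congr_ae (Filter.Eventually.of_forall fun ω' => ?_)
    show σ _ = f i (X ω) (Y ω')
    rw [hfdef]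
    refine congrArg σ ?_
    show (Uᵀ *ᵥ w i) ⬝ᵥ (Uᵀ *ᵥ x ω) + c i
        + ((1 - U * Uᵀ) *ᵥ w i) ⬝ᵥ ((1 - U * Uᵀ) *ᵥ x ω') = _
    rw [hdot1, hdotQ]
    show w i ⬝ᵥ X ω + c i + w i ⬝ᵥ Y ω' = w i ⬝ᵥ X ω + w i ⬝ᵥ Y ω' + c i
    ring
  -- strong measurability of parametric integrals
  have hgm : ∀ i, Measurable (fun p => ∫ q, f i p q ∂(μ.map Y)) := fun i =>
    ((hfm i).stronglyMeasurable.integral_prod_right' (ν := μ.map Y)).measurable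
  have hMm : ∀ i j, Measurable (fun p => ∫ q, f i p q * f j p q ∂(μ.map Y)) := fun i j =>
    (((hfm i).mul (hfm j)).stronglyMeasurable.integral_prod_right' (ν := μ.map Y)).measurable
  -- the three integral conversions
  have E1 : ∫ ω, (φ (Uᵀ *ᵥ x ω) - ∑ i, a i * σ (w i ⬝ᵥ x ω + c i)) ^ 2 ∂μ
      = ∫ pq : (Fin d → ℝ) × (Fin d → ℝ), (Φ pq.1 - ∑ i, a i * f i pq.1 pq.2) ^ 2
          ∂((μ.map X).prod (μ.map Y)) := by
    have hm1 : AEStronglyMeasurable (fun pq : (Fin d → ℝ) × (Fin d → ℝ) =>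
        (Φ pq.1 - ∑ i, a i * f i pq.1 pq.2) ^ 2) (μ.map (fun ω => (X ω, Y ω))) :=
      (((hΦm.comp measurable_fst).sub (Finset.measurable_sum Finset.univ fun i _ =>
        ((hfm i).const_mul _))).pow_const 2).aestronglyMeasurable
    rw [← hmap, integral_map hpair.aemeasurable hm1]
    refine integral_congr_ae (Filter.Eventually.of_forall fun ω => ?_)
    simp only [id1, id2']
  have E2 : ∫ ω, (φ (Uᵀ *ᵥ x ω)
        - ∑ i, a i * smoothedAct μ x σ (1 - U * Uᵀ) (w i)
            ((Uᵀ *ᵥ w i) ⬝ᵥ (Uᵀ *ᵥ x ω) + c i)) ^ 2 ∂μ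
      = ∫ p, (Φ p - ∑ i, a i * ∫ q, f i p q ∂(μ.map Y)) ^ 2 ∂(μ.map X) := by
    have hm2 : AEStronglyMeasurable (fun p =>
        (Φ p - ∑ i, a i * ∫ q, f i p q ∂(μ.map Y)) ^ 2) (μ.map X) :=
      ((hΦm.sub (Finset.measurable_sum Finset.univ fun i _ =>
        (hgm i).const_mul _)).pow_const 2).aestronglyMeasurable
    rw [integral_map hXm.aemeasurable hm2]
    refine integral_congr_ae (Filter.Eventually.of_forall fun ω => ?_)
    simp only [id1, hgval]
  have E3 : ∀ i j, lambdaMat μ x σ (U * Uᵀ) (1 - U * Uᵀ) w c i j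
      = ∫ p, ((∫ q, f i p q * f j p q ∂(μ.map Y))
          - (∫ q, f i p q ∂(μ.map Y)) * (∫ q, f j p q ∂(μ.map Y))) ∂(μ.map X) := by
    intro i j
    have hm3 : AEStronglyMeasurable (fun p => (∫ q, f i p q * f j p q ∂(μ.map Y))
        - (∫ q, f i p q ∂(μ.map Y)) * (∫ q, f j p q ∂(μ.map Y))) (μ.map X) :=
      ((hMm i j).sub ((hgm i).mul (hgm j))).aestronglyMeasurable
    rw [lambdaMat, integral_map hXm.aemeasurable hm3]
    refine integral_congr_ae (Filter.Eventually.of_forall fun ω => ?_)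
    have hin1 : ∫ ω', f i (X ω) (Y ω') * f j (X ω) (Y ω') ∂μ
        = ∫ q, f i (X ω) q * f j (X ω) q ∂(μ.map Y) :=
      (integral_map hYm.aemeasurable ((hfq i (X ω)).mul (hfq j (X ω))).aestronglyMeasurable).symm
    have hin2 : ∀ l, ∫ ω', f l (X ω) (Y ω') ∂μ = ∫ q, f l (X ω) q ∂(μ.map Y) := fun l =>
      (integral_map hYm.aemeasurable (hfq l (X ω)).aestronglyMeasurable).symm
    show (∫ ω', f i (X ω) (Y ω') * f j (X ω) (Y ω') ∂μ)
        - (∫ ω', f i (X ω) (Y ω') ∂μ) * (∫ ω', f j (X ω) (Y ω') ∂μ) = _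
    rw [hin1, hin2, hin2]
  rw [E1, E2]
  simp only [E3]
  have hcore := core (μ.map X) (μ.map Y) Φ f a hΦm hfm hΦ2 hf2
  rw [hcore]
  ring
end

section
/- Let σ be a real polynomial, let d ≥ 1, and let w ∼ N(0, (1/d) I_d) and b ∼ N(0, 1/d) be independent. Let T, T' ∈ ℕ^d be multi-indices such that T_i ≢ T'_i (mod 2) for some i ∈ {1, …, d}. Then E_{w,b}[ φ̂_{w,b}(T) · φ̂_{w,b}(T') ] = 0. -/
open MeasureTheory ProbabilityTheory

lemma gauss_map_neg (v : NNReal) : (gaussianReal 0 v).map (fun x : ℝ => -x) = gaussianReal 0 v := by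
  have h := gaussianReal_map_const_mul (μ := 0) (v := v) (-1)
  simpa using h

lemma hermite_eval_neg (n : ℕ) (y : ℝ) :
    (Polynomial.aeval (-y) (Polynomial.hermite n)) = (-1)^n * Polynomial.aeval y (Polynomial.hermite n) := by
  rw [Polynomial.aeval_def, Polynomial.aeval_def, Polynomial.eval₂_eq_sum,
    Polynomial.eval₂_eq_sum, Polynomial.sum, Polynomial.sum, Finset.mul_sum]
  refine Finset.sum_congr rfl fun k hk => ?_
  have hc : ¬ Odd (n + k) := fun h => (Polynomial.mem_support_iff.mp hk) (Polynomial.coeff_hermite_of_odd_add h)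
  have he : n % 2 = k % 2 := by rw [Nat.odd_iff] at hc; omega
  have hpow : ((-1:ℝ))^k = (-1)^n := by
    rcases Nat.even_or_odd n with h | h
    · have hk2 : Even k := by rw [Nat.even_iff] at h ⊢; omega
      rw [h.neg_one_pow, hk2.neg_one_pow]
    · have hk2 : Odd k := by rw [Nat.odd_iff] at h ⊢; omega
      rw [h.neg_one_pow, hk2.neg_one_pow]
  rw [neg_pow, hpow]; ring

lemma hermN_neg (n : ℕ) (y : ℝ) : hermN n (-y) = (-1)^n * hermN n y := by
  simp only [hermN, hermite_eval_neg, mul_div_assoc]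

/-- Flip coordinate `i`. -/
noncomputable def flipFun {d : ℕ} (i : Fin d) (x : Fin d → ℝ) : Fin d → ℝ :=
  fun j => if j = i then -x j else x j

lemma flipFun_meas {d : ℕ} (i : Fin d) : Measurable (flipFun i) := by
  refine measurable_pi_lambda _ fun j => ?_
  by_cases h : j = i
  · simpa [flipFun, h] using (measurable_pi_apply j : Measurable fun c : Fin d → ℝ => c j)
  · simpa [flipFun, h] using (measurable_pi_apply j : Measurable fun c : Fin d → ℝ => c j)

noncomputable def flipEquiv {d : ℕ} (i : Fin d) : (Fin d → ℝ) ≃ᵐ (Fin d → ℝ) where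
  toFun := flipFun i
  invFun := flipFun i
  left_inv := fun x => by funext j; by_cases h : j = i <;> simp [flipFun, h]
  right_inv := fun x => by funext j; by_cases h : j = i <;> simp [flipFun, h]
  measurable_toFun := flipFun_meas i
  measurable_invFun := flipFun_meas i

lemma flip_measurePreserving {d : ℕ} (i : Fin d) (v : NNReal) :
    MeasurePreserving (flipFun i) (Measure.pi fun _ : Fin d => gaussianReal 0 v)
      (Measure.pi fun _ : Fin d => gaussianReal 0 v) := by
  have h : ∀ j : Fin d, MeasurePreserving (fun y : ℝ => if j = i then -y else y)
      (gaussianReal 0 v) (gaussianReal 0 v) := by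
    intro j
    by_cases h : j = i
    · simp only [h, if_true]
      exact ⟨measurable_neg, gauss_map_neg v⟩
    · simp only [h, if_false]
      exact MeasurePreserving.id _
  have := measurePreserving_pi (fun _ : Fin d => gaussianReal 0 v)
    (fun _ : Fin d => gaussianReal 0 v) h
  exact this

lemma phiHat_flip (d : ℕ) (σ : ℝ → ℝ) (w : Fin d → ℝ) (b : ℝ) (T : Fin d → ℕ) (i : Fin d) :
    phiHat d σ (flipFun i w) b T = (-1)^(T i) * phiHat d σ w b T := by
  unfold phiHat gaussD
  rw [← (flip_measurePreserving i 1).integral_comp (flipEquiv i).measurableEmbedding,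
    ← integral_const_mul]
  refine integral_congr_ae (Filter.Eventually.of_forall fun x => ?_)
  have hsum : ∑ j, flipFun i w j * flipFun i x j + b = ∑ j, w j * x j + b := by
    congr 1
    refine Finset.sum_congr rfl fun j _ => ?_
    by_cases h : j = i <;> simp [flipFun, h]
  have hchi : chiH T (flipFun i x) = (-1)^(T i) * chiH T x := by
    unfold chiH
    have hterm : ∀ j, hermN (T j) (flipFun i x j)
        = (if j = i then ((-1:ℝ))^(T i) else 1) * hermN (T j) (x j) := by
      intro j
      by_cases h : j = i
      · subst h; simp [flipFun, hermN_neg]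
      · simp [flipFun, h]
    rw [Finset.prod_congr rfl (fun j _ => hterm j), Finset.prod_mul_distrib,
      Finset.prod_ite_eq' Finset.univ i (fun _ => ((-1:ℝ))^(T i))]
    simp
  show σ (∑ j, flipFun i w j * flipFun i x j + b) * chiH T (flipFun i x)
      = (-1)^(T i) * (σ (∑ j, w j * x j + b) * chiH T x)
  rw [hsum, hchi]; ring

/-- for a polynomial σ, with w ∼ N(0, (1/d) I_d) and b ∼ N(0, 1/d)
independent, if T and T' differ in parity in some coordinate, then
E_{w,b}[φ̂_{w,b}(T) φ̂_{w,b}(T')] = 0. -/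
theorem stmt15 (d : ℕ) (hd : 1 ≤ d) (σp : Polynomial ℝ)
    (T T' : Fin d → ℕ) (i : Fin d) (hi : T i % 2 ≠ T' i % 2) :
    ∫ wb : (Fin d → ℝ) × ℝ,
        phiHat d (fun y => σp.eval y) wb.1 wb.2 T *
          phiHat d (fun y => σp.eval y) wb.1 wb.2 T'
      ∂(featMeas d ((d : NNReal))⁻¹) = 0 := by
  set v : NNReal := ((d : NNReal))⁻¹
  set F : (Fin d → ℝ) × ℝ → ℝ := fun wb =>
    phiHat d (fun y => σp.eval y) wb.1 wb.2 T * phiHat d (fun y => σp.eval y) wb.1 wb.2 T'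
  have hΦ : MeasurePreserving ((flipEquiv i).prodCongr (MeasurableEquiv.refl ℝ))
      (featMeas d v) (featMeas d v) :=
    (flip_measurePreserving i v).prod (MeasurePreserving.id _)
  have hcomp := hΦ.integral_comp ((flipEquiv i).prodCongr (MeasurableEquiv.refl ℝ)).measurableEmbedding F
  have hodd : (T i + T' i) % 2 = 1 := by omega
  have hneg : ∀ wb : (Fin d → ℝ) × ℝ,
      F (((flipEquiv i).prodCongr (MeasurableEquiv.refl ℝ)) wb) = -F wb := by
    intro wb
    have h1 : (((flipEquiv i).prodCongr (MeasurableEquiv.refl ℝ)) wb) =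
        (flipFun i wb.1, wb.2) := rfl
    rw [h1]
    simp only [F, phiHat_flip]
    have : ((-1:ℝ))^(T i) * ((-1:ℝ))^(T' i) = -1 := by
      rw [← pow_add]
      exact Odd.neg_one_pow (Nat.odd_iff.mpr hodd)
    rw [mul_mul_mul_comm, this, neg_one_mul]
  rw [funext hneg] at hcomp
  rw [integral_neg] at hcomp
  linarith
end

section
/- Let n ≥ 1 and d ≥ 1 be integers, let σ : ℂ → ℂ be a polynomial, and let w, b be random with the complex Gaussian distribution described in the context. Then for all j, j' ∈ {0, …, n−1}^d with j ≠ j', E_{w,b}[ φ̂_{w,b}(j) · conj(φ̂_{w,b}(j')) ] = 0. -/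
open MeasureTheory ProbabilityTheory Complex

/-- The `k`-th `n`-th root of unity `exp(2πik/n)`. -/
noncomputable def rootU (n : ℕ) (k : Fin n) : ℂ :=
  Complex.exp (2 * Real.pi * Complex.I * (k : ℕ) / n)

/-- The discrete Fourier coefficient
`φ̂_{w,b}(j) = (1/n^d) Σ_{x ∈ 𝕌_n^d} σ(⟨w,x⟩ + b) conj(χ_j(x))`, where
`⟨w,x⟩ = Σᵢ conj(wᵢ) xᵢ` and `χ_j(x) = x₁^{j₁} ⋯ x_d^{j_d}`; points of `𝕌_n^d` are
parametrized by `k : Fin d → Fin n` via `xᵢ = exp(2πik_i/n)`. -/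
noncomputable def phiHatC (n d : ℕ) (σ : ℂ → ℂ) (w : Fin d → ℂ) (b : ℂ)
    (j : Fin d → Fin n) : ℂ :=
  (1 / (n : ℂ) ^ d) * ∑ k : Fin d → Fin n,
    σ ((∑ i, (starRingEnd ℂ) (w i) * rootU n (k i)) + b) *
      (starRingEnd ℂ) (∏ i, rootU n (k i) ^ (j i : ℕ))

/-- Real/imaginary parts `(re, im)` assembled into a complex number. -/
noncomputable def toC (z : ℝ × ℝ) : ℂ := z.1 + z.2 * Complex.I

/-- The law of `(w, b)` where `w ∈ ℂ^d` has i.i.d. coordinates, each with independent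
`N(0, v)` real and imaginary parts, and `b ∈ ℂ` likewise, independent of `w`; complex
numbers are represented by pairs `(re, im)`. -/
noncomputable def cFeatMeas (d : ℕ) (v : NNReal) :
    Measure ((Fin d → ℝ × ℝ) × (ℝ × ℝ)) :=
  (Measure.pi fun _ : Fin d => (gaussianReal 0 v).prod (gaussianReal 0 v)).prod
    ((gaussianReal 0 v).prod (gaussianReal 0 v))

lemma toC_eq (p : ℝ × ℝ) : toC p = Complex.measurableEquivRealProd.symm p := by
  rw [Complex.measurableEquivRealProd_symm_apply]
  apply Complex.ext <;> simp [toC]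

/-- Rotation by a unit complex number, as a measurable equiv of `ℝ × ℝ`. -/
noncomputable def rotE (c : Circle) : (ℝ × ℝ) ≃ᵐ (ℝ × ℝ) :=
  (Complex.measurableEquivRealProd.symm.trans (rotation c).toMeasurableEquiv).trans
    Complex.measurableEquivRealProd

lemma toC_rotE (c : Circle) (p : ℝ × ℝ) : toC (rotE c p) = (c : ℂ) * toC p := by
  rw [toC_eq, toC_eq]
  simp [rotE, rotation_apply]
  apply Complex.ext <;> simp [Complex.mul_re, Complex.mul_im]

lemma rotE_volume (c : Circle) :
    MeasurePreserving (rotE c) (volume.prod volume) (volume.prod volume) := by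
  rw [← Measure.volume_eq_prod]
  exact Complex.volume_preserving_equiv_real_prod.comp
    (((rotation c).measurePreserving).comp Complex.volume_preserving_equiv_real_prod.symm)

lemma normSq_rotE (c : Circle) (p : ℝ × ℝ) :
    (rotE c p).1 ^ 2 + (rotE c p).2 ^ 2 = p.1 ^ 2 + p.2 ^ 2 := by
  have h1 : ∀ q : ℝ × ℝ, q.1 ^ 2 + q.2 ^ 2 = Complex.normSq (toC q) := by
    intro q
    simp [toC_eq, Complex.normSq_apply, Complex.measurableEquivRealProd_symm_apply, sq]
  rw [h1, h1, toC_rotE, map_mul]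
  simp

lemma gauss_prod_eq (v : NNReal) (hv : v ≠ 0) :
    (gaussianReal 0 v).prod (gaussianReal 0 v) =
      (volume.prod volume).withDensity
        (fun p : ℝ × ℝ => gaussianPDF 0 v p.1 * gaussianPDF 0 v p.2) := by
  refine Measure.prod_eq fun s t hs ht => ?_
  rw [withDensity_apply _ (hs.prod ht), ← Measure.prod_restrict,
    lintegral_prod_mul (measurable_gaussianPDF 0 v).aemeasurable
      (measurable_gaussianPDF 0 v).aemeasurable,
    gaussianReal_of_var_ne_zero _ hv, withDensity_apply _ hs, withDensity_apply _ ht]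

lemma gaussPDF_prod_rot (v : NNReal) (c : Circle) (p : ℝ × ℝ) :
    gaussianPDF 0 v (rotE c p).1 * gaussianPDF 0 v (rotE c p).2 =
      gaussianPDF 0 v p.1 * gaussianPDF 0 v p.2 := by
  have key : ∀ q : ℝ × ℝ, gaussianPDF 0 v q.1 * gaussianPDF 0 v q.2 =
      ENNReal.ofReal ((Real.sqrt (2 * Real.pi * v))⁻¹ ^ 2 *
        Real.exp (-(q.1 ^ 2 + q.2 ^ 2) / (2 * v))) := by
    intro q
    rw [gaussianPDF, gaussianPDF, ← ENNReal.ofReal_mul (gaussianPDFReal_nonneg _ _ _)]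
    congr 1
    simp only [gaussianPDFReal, sub_zero]
    rw [show (Real.sqrt (2 * Real.pi * ↑v))⁻¹ * Real.exp (-q.1 ^ 2 / (2 * ↑v)) *
        ((Real.sqrt (2 * Real.pi * ↑v))⁻¹ * Real.exp (-q.2 ^ 2 / (2 * ↑v))) =
        (Real.sqrt (2 * Real.pi * ↑v))⁻¹ ^ 2 *
        (Real.exp (-q.1 ^ 2 / (2 * ↑v)) * Real.exp (-q.2 ^ 2 / (2 * ↑v))) by ring,
      ← Real.exp_add]
    congr 2
    ring
  rw [key, key, normSq_rotE]

lemma rotE_gauss (v : NNReal) (hv : v ≠ 0) (c : Circle) :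
    MeasurePreserving (rotE c) ((gaussianReal 0 v).prod (gaussianReal 0 v))
      ((gaussianReal 0 v).prod (gaussianReal 0 v)) := by
  refine ⟨(rotE c).measurable, ?_⟩
  rw [gauss_prod_eq v hv]
  ext s hs
  rw [Measure.map_apply (rotE c).measurable hs,
    withDensity_apply _ ((rotE c).measurable hs), withDensity_apply _ hs]
  have : (fun p : ℝ × ℝ => gaussianPDF 0 v p.1 * gaussianPDF 0 v p.2) =
      fun p => gaussianPDF 0 v (rotE c p).1 * gaussianPDF 0 v (rotE c p).2 :=
    funext fun p => (gaussPDF_prod_rot v c p).symm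
  conv_lhs => rw [this]
  exact (rotE_volume c).setLIntegral_comp_preimage_emb (rotE c).measurableEmbedding
    (fun p => gaussianPDF 0 v p.1 * gaussianPDF 0 v p.2) s

/-- Rotation of the `i0`-th coordinate of `w` by `c`. -/
noncomputable def rotT (d : ℕ) (i0 : Fin d) (c : Circle) :
    ((Fin d → ℝ × ℝ) × (ℝ × ℝ)) ≃ᵐ ((Fin d → ℝ × ℝ) × (ℝ × ℝ)) :=
  (MeasurableEquiv.piCongrRight
    (fun i => if i = i0 then rotE c else MeasurableEquiv.refl _)).prodCongr
    (MeasurableEquiv.refl _)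

lemma rotT_apply_fst (d : ℕ) (i0 : Fin d) (c : Circle)
    (ω : (Fin d → ℝ × ℝ) × (ℝ × ℝ)) (i : Fin d) :
    (rotT d i0 c ω).1 i = if i = i0 then rotE c (ω.1 i) else ω.1 i := by
  show (if i = i0 then rotE c else MeasurableEquiv.refl _) (ω.1 i) = _
  split <;> rfl

lemma rotT_apply_snd (d : ℕ) (i0 : Fin d) (c : Circle)
    (ω : (Fin d → ℝ × ℝ) × (ℝ × ℝ)) : (rotT d i0 c ω).2 = ω.2 := rfl

lemma rotT_mp (d : ℕ) (v : NNReal) (hv : v ≠ 0) (i0 : Fin d) (c : Circle) :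
    MeasurePreserving (rotT d i0 c) (cFeatMeas d v) (cFeatMeas d v) := by
  have hpi : MeasurePreserving
      (fun (a : Fin d → ℝ × ℝ) i =>
        (if i = i0 then rotE c else MeasurableEquiv.refl _) (a i))
      (Measure.pi fun _ : Fin d => (gaussianReal 0 v).prod (gaussianReal 0 v))
      (Measure.pi fun _ : Fin d => (gaussianReal 0 v).prod (gaussianReal 0 v)) := by
    refine measurePreserving_pi _ _ fun i => ?_
    by_cases h : i = i0 <;> simp only [h, if_true, if_false]
    · exact rotE_gauss v hv c
    · exact MeasurePreserving.id _
  exact hpi.prod (MeasurePreserving.id _)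

lemma rootU_add (n : ℕ) (hn : n ≠ 0) (a b : Fin n) :
    rootU n (a + b) = rootU n a * rootU n b := by
  have hnC : (n : ℂ) ≠ 0 := Nat.cast_ne_zero.mpr hn
  have hval : ((a + b : Fin n) : ℕ) = (a.val + b.val) % n := by
    simp [Fin.add_def]
  set m := a.val + b.val with hm
  set K := m / n with hK
  have hmd : m % n + n * K = m := Nat.mod_add_div _ _
  have hmC : ((m % n : ℕ) : ℂ) = (a.val : ℂ) + (b.val : ℂ) - (n : ℂ) * (K : ℂ) := by
    have h2 : ((m % n : ℕ) : ℂ) + (n : ℂ) * (K : ℂ) = ((m : ℕ) : ℂ) := by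
      exact_mod_cast congrArg (fun t : ℕ => (t : ℂ)) hmd
    have h3 : ((m : ℕ) : ℂ) = (a.val : ℂ) + (b.val : ℂ) := by
      rw [hm]; push_cast; ring
    rw [h3] at h2
    linear_combination h2
  rw [rootU, rootU, rootU, ← Complex.exp_add, hval, hmC]
  have harg : 2 * (Real.pi : ℂ) * Complex.I *
      ((a.val : ℂ) + (b.val : ℂ) - (n : ℂ) * (K : ℂ)) / n =
      (2 * (Real.pi : ℂ) * Complex.I * a.val / n + 2 * Real.pi * Complex.I * b.val / n) +
      ((-(K : ℤ) : ℤ) : ℂ) * (2 * Real.pi * Complex.I) := by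
    rw [Int.cast_neg, Int.cast_natCast]
    field_simp
    ring
  rw [harg, Complex.exp_add, Complex.exp_int_mul_two_pi_mul_I, mul_one]

lemma conj_rootU_mul_self (n : ℕ) (k : Fin n) :
    (starRingEnd ℂ) (rootU n k) * rootU n k = 1 := by
  rw [rootU, ← Complex.exp_conj, ← Complex.exp_add]
  rw [show (starRingEnd ℂ) (2 * (Real.pi : ℂ) * Complex.I * (k : ℕ) / n) +
      2 * (Real.pi : ℂ) * Complex.I * (k : ℕ) / n = 0 by
    simp [map_div₀, map_mul, Complex.conj_I, map_ofNat, Complex.conj_ofReal, map_natCast]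
    ring]
  exact Complex.exp_zero

lemma phiHat_rot (n d : ℕ) [NeZero n] (σ : ℂ → ℂ) (w : Fin d → ℂ) (b : ℂ)
    (j : Fin d → Fin n) (i0 : Fin d) :
    phiHatC n d σ (fun i => if i = i0 then rootU n 1 * w i else w i) b j =
      (starRingEnd ℂ) (rootU n 1) ^ (j i0 : ℕ) * phiHatC n d σ w b j := by
  have hn : n ≠ 0 := NeZero.ne n
  set u : ℂ := rootU n 1 with hu
  unfold phiHatC
  rw [mul_left_comm]
  congr 1
  let Φ : (Fin d → Fin n) ≃ (Fin d → Fin n) :=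
    Equiv.piCongrRight fun i => if i = i0 then Equiv.addRight (1 : Fin n) else Equiv.refl _
  rw [← Equiv.sum_comp Φ, Finset.mul_sum]
  refine Finset.sum_congr rfl fun k _ => ?_
  have hΦ : ∀ i, Φ k i = if i = i0 then k i + 1 else k i := by
    intro i
    show (if i = i0 then Equiv.addRight (1 : Fin n) else Equiv.refl _) (k i) = _
    split <;> rfl
  have hroot : ∀ i, rootU n (Φ k i) = if i = i0 then rootU n (k i) * u else rootU n (k i) := by
    intro i
    rw [hΦ]
    split
    · rw [rootU_add n hn]
    · rfl
  have hargs : (∑ i, (starRingEnd ℂ) (if i = i0 then u * w i else w i) * rootU n (Φ k i)) =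
      ∑ i, (starRingEnd ℂ) (w i) * rootU n (k i) := by
    refine Finset.sum_congr rfl fun i _ => ?_
    rw [hroot]
    by_cases h : i = i0 <;> simp only [h, if_true, if_false]
    · rw [map_mul]
      have := conj_rootU_mul_self n (1 : Fin n)
      rw [← hu] at this
      calc (starRingEnd ℂ) u * (starRingEnd ℂ) (w i0) * (rootU n (k i0) * u) =
          ((starRingEnd ℂ) u * u) * ((starRingEnd ℂ) (w i0) * rootU n (k i0)) := by ring
        _ = (starRingEnd ℂ) (w i0) * rootU n (k i0) := by rw [this, one_mul]
  have hprod : (∏ i, rootU n (Φ k i) ^ (j i : ℕ)) =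
      u ^ (j i0 : ℕ) * ∏ i, rootU n (k i) ^ (j i : ℕ) := by
    have : ∀ i, rootU n (Φ k i) ^ (j i : ℕ) =
        (if i = i0 then u ^ (j i0 : ℕ) else 1) * rootU n (k i) ^ (j i : ℕ) := by
      intro i
      rw [hroot]
      by_cases h : i = i0 <;> simp only [h, if_true, if_false, one_mul]
      rw [mul_pow]; ring
    rw [Finset.prod_congr rfl fun i _ => this i, Finset.prod_mul_distrib,
      Finset.prod_ite_eq' Finset.univ i0 (fun _ => u ^ (j i0 : ℕ))]
    simp
  beta_reduce
  rw [hargs, hprod, map_mul, map_pow]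
  ring

lemma rootC_ne_one (n : ℕ) [NeZero n] (hn2 : 2 ≤ n) (a a' : ℕ) (ha : a < n) (ha' : a' < n)
    (hne : a ≠ a') :
    (starRingEnd ℂ) (rootU n (1 : Fin (n))) ^ a * rootU n (1 : Fin n) ^ a' ≠ 1 := by
  have hval : ((1 : Fin n) : ℕ) = 1 := by
    rw [Fin.val_one']
    exact Nat.mod_eq_of_lt hn2
  set t : ℂ := 2 * (Real.pi : ℂ) * Complex.I * ((1 : Fin n) : ℕ) / n with ht
  have hconj : (starRingEnd ℂ) (rootU n (1 : Fin n)) = Complex.exp (-t) := by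
    rw [rootU, ← Complex.exp_conj]
    congr 1
    rw [ht]
    simp [map_div₀, map_mul, Complex.conj_I, map_ofNat, Complex.conj_ofReal, map_natCast]
    ring
  intro hC
  rw [hconj, rootU, ← ht, ← Complex.exp_nat_mul, ← Complex.exp_nat_mul,
    ← Complex.exp_add] at hC
  have harg : (a : ℂ) * (-t) + (a' : ℂ) * t = ((a' : ℤ) - (a : ℤ) : ℤ) * t := by
    push_cast; ring
  rw [harg, Complex.exp_eq_one_iff] at hC
  obtain ⟨k, hk⟩ := hC
  set m : ℤ := (a' : ℤ) - (a : ℤ) with hm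
  have hnC : (n : ℂ) ≠ 0 := Nat.cast_ne_zero.mpr (by omega)
  have h2pi : (2 : ℂ) * Real.pi * Complex.I ≠ 0 := by
    simp [Real.pi_ne_zero, Complex.I_ne_zero]
  have hmn : (m : ℂ) * (2 * Real.pi * Complex.I) =
      ((k * n : ℤ) : ℂ) * (2 * Real.pi * Complex.I) := by
    have := congrArg (fun z => z * (n : ℂ)) hk
    simp only [ht, hval] at this
    push_cast at this ⊢
    field_simp at this
    linear_combination (2 * (Real.pi : ℂ) * Complex.I) * this
  have hmi : m = k * n := by
    have := mul_right_cancel₀ h2pi hmn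
    exact_mod_cast this
  have hmne : m ≠ 0 := by
    rw [hm]; omega
  have hbound : -(n : ℤ) < m ∧ m < n := by constructor <;> omega
  rcases lt_trichotomy k 0 with hk0 | hk0 | hk0
  · have : m ≤ -(n : ℤ) := by
      rw [hmi]
      have : k ≤ -1 := by omega
      nlinarith [hbound.1]
    omega
  · rw [hk0] at hmi; simp at hmi; omega
  · have : (n : ℤ) ≤ m := by
      rw [hmi]
      have : 1 ≤ k := by omega
      nlinarith
    omega

/-- for a polynomial σ : ℂ → ℂ and the complex Gaussian weights
w ∼ (N(0, (1/d)I₂))^d, b ∼ N(0, (1/d)I₂), distinct Fourier coefficients of the random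
feature are uncorrelated: E[φ̂_{w,b}(j) conj(φ̂_{w,b}(j'))] = 0 whenever j ≠ j'. -/
theorem stmt16 (n d : ℕ) (hn : 1 ≤ n) (hd : 1 ≤ d) (σp : Polynomial ℂ)
    (j j' : Fin d → Fin n) (hjj : j ≠ j') :
    ∫ ω : (Fin d → ℝ × ℝ) × (ℝ × ℝ),
        phiHatC n d (fun z => σp.eval z) (fun i => toC (ω.1 i)) (toC ω.2) j *
          (starRingEnd ℂ)
            (phiHatC n d (fun z => σp.eval z) (fun i => toC (ω.1 i)) (toC ω.2) j')
      ∂(cFeatMeas d ((d : NNReal))⁻¹) = 0 := by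
  rcases eq_or_lt_of_le hn with hn1 | hn2
  · exfalso
    apply hjj
    funext i
    have : Subsingleton (Fin n) := by rw [← hn1]; infer_instance
    exact Subsingleton.elim _ _
  haveI : NeZero n := ⟨by omega⟩
  obtain ⟨i0, hi0⟩ := Function.ne_iff.mp hjj
  have hv : ((d : NNReal))⁻¹ ≠ 0 :=
    inv_ne_zero (Nat.cast_ne_zero.mpr (by omega))
  set u : ℂ := rootU n (1 : Fin n) with hu
  have hmem : u ∈ Metric.sphere (0 : ℂ) 1 := by
    rw [mem_sphere_zero_iff_norm]
    have : 2 * (Real.pi : ℂ) * Complex.I * ((1 : Fin n) : ℕ) / n =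
        ((2 * Real.pi * ((1 : Fin n) : ℕ) / n : ℝ) : ℂ) * Complex.I := by
      push_cast; ring
    rw [hu, rootU, this]
    exact Complex.norm_exp_ofReal_mul_I _
  set c : Circle := ⟨u, hmem⟩ with hc
  set σ : ℂ → ℂ := fun z => σp.eval z with hσ
  set f : (Fin d → ℝ × ℝ) × (ℝ × ℝ) → ℂ := fun ω =>
    phiHatC n d σ (fun i => toC (ω.1 i)) (toC ω.2) j *
      (starRingEnd ℂ) (phiHatC n d σ (fun i => toC (ω.1 i)) (toC ω.2) j') with hf
  set C : ℂ := (starRingEnd ℂ) u ^ (j i0 : ℕ) * u ^ (j' i0 : ℕ) with hC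
  have hcomp : ∫ ω, f (rotT d i0 c ω) ∂(cFeatMeas d ((d : NNReal))⁻¹) =
      ∫ ω, f ω ∂(cFeatMeas d ((d : NNReal))⁻¹) :=
    (rotT_mp d _ hv i0 c).integral_comp (rotT d i0 c).measurableEmbedding f
  have hfT : ∀ ω, f (rotT d i0 c ω) = C * f ω := by
    intro ω
    have hw : (fun i => toC ((rotT d i0 c ω).1 i)) =
        (fun i => if i = i0 then rootU n (1 : Fin n) * toC (ω.1 i) else toC (ω.1 i)) := by
      funext i
      rw [rotT_apply_fst]
      split
      · rw [toC_rotE]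
      · rfl
    rw [hf]
    simp only [rotT_apply_snd, hw]
    rw [phiHat_rot n d σ _ _ j i0, phiHat_rot n d σ _ _ j' i0, map_mul, map_pow,
      Complex.conj_conj]
    rw [hC, hu]
    ring
  rw [funext hfT] at hcomp
  rw [MeasureTheory.integral_const_mul] at hcomp
  have hzero : (C - 1) * ∫ a, f a ∂(cFeatMeas d ((d : NNReal))⁻¹) = 0 := by
    linear_combination hcomp
  rcases mul_eq_zero.mp hzero with h1 | h2
  · exfalso
    have hC1 : C = 1 := by linear_combination h1
    exact rootC_ne_one n hn2 (j i0) (j' i0) (j i0).isLt (j' i0).isLt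
      (fun he => hi0 (Fin.ext he)) (by rw [← hu, ← hC]; exact hC1)
  · exact h2
end

section
/- Let n ≥ 1 and d ≥ 1 be integers, let j ∈ {0, …, n−1}^d, let w ∈ ℂ^d, b ∈ ℂ, and let k be a non-negative integer with k ≤ |j|. Then the average (1/n^d) Σ_{x ∈ 𝕌_n^d} (⟨w,x⟩ + b)^k · conj(χ_j(x)) equals 0 if k < |j|, and equals the multinomial coefficient k!/(j_1! ⋯ j_d!) times conj(w_1)^{j_1} ⋯ conj(w_d)^{j_d} if k = |j|. -/
open MeasureTheory ProbabilityTheory Complex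

lemma orth (n : ℕ) (hn : 1 ≤ n) (m p : ℕ) :
    ∑ y : Fin n, rootU n y ^ m * (starRingEnd ℂ) (rootU n y ^ p) =
      if ((n:ℤ) ∣ ((m:ℤ) - (p:ℤ))) then (n : ℂ) else 0 := by
  have hn0 : (n : ℂ) ≠ 0 := Nat.cast_ne_zero.2 (by omega)
  set t : ℤ := (m : ℤ) - p with ht
  set ξ : ℂ := Complex.exp (2 * Real.pi * Complex.I * t / n) with hξ
  have hterm : ∀ y : Fin n,
      rootU n y ^ m * (starRingEnd ℂ) (rootU n y ^ p) = ξ ^ (y : ℕ) := by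
    intro y
    have hc : (starRingEnd ℂ) (2 * (Real.pi : ℂ) * Complex.I * (y : ℕ) / n)
        = 2 * (Real.pi : ℂ) * (-Complex.I) * (y : ℕ) / n := by
      simp [map_ofNat]
    rw [rootU, hξ, ← Complex.exp_nat_mul, map_pow, ← Complex.exp_conj,
      ← Complex.exp_nat_mul, ← Complex.exp_add, ← Complex.exp_nat_mul, hc]
    congr 1
    rw [ht]
    push_cast
    ring
  simp_rw [hterm]
  rw [Fin.sum_univ_eq_sum_range (fun i => ξ ^ i) n]
  by_cases hdvd : (n : ℤ) ∣ t
  · obtain ⟨q, hq⟩ := hdvd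
    have hξ1 : ξ = 1 := by
      rw [hξ, hq]
      have h2 : 2 * (Real.pi : ℂ) * Complex.I * (((n : ℤ) * q : ℤ) : ℂ) / n
          = (q : ℂ) * (2 * Real.pi * Complex.I) := by
        push_cast
        field_simp
      rw [h2]
      exact Complex.exp_int_mul_two_pi_mul_I q
    simp [hξ1, ht ▸ (hq ▸ Dvd.intro q rfl : (n:ℤ) ∣ t)]
    exact fun h => absurd ⟨q, hq⟩ h
  · have hξn : ξ ^ n = 1 := by
      rw [hξ, ← Complex.exp_nat_mul]
      have h2 : (n : ℂ) * (2 * Real.pi * Complex.I * t / n) = (t : ℂ) * (2 * Real.pi * Complex.I) := by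
        field_simp
      rw [h2]
      exact Complex.exp_int_mul_two_pi_mul_I t
    have hξ1 : ξ ≠ 1 := by
      intro h
      rw [hξ, Complex.exp_eq_one_iff] at h
      obtain ⟨z, hz⟩ := h
      apply hdvd
      refine ⟨z, ?_⟩
      have h2 : (2 * (Real.pi : ℂ) * Complex.I) ≠ 0 := by
        simp [Real.pi_ne_zero, Complex.I_ne_zero]
      have h3 : 2 * (Real.pi:ℂ) * Complex.I * (t : ℂ)
          = 2 * (Real.pi:ℂ) * Complex.I * ((n : ℂ) * z) := by
        field_simp at hz
        linear_combination (2 * (Real.pi:ℂ) * Complex.I) * hz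
      have h4 : (t : ℂ) = (n : ℂ) * z := mul_left_cancel₀ h2 h3
      exact_mod_cast h4
    rw [geom_sum_eq hξ1, hξn]
    simp [hdvd]

/-- for j ∈ {0,…,n−1}^d, w ∈ ℂ^d, b ∈ ℂ and 0 ≤ k ≤ |j|, the average
(1/n^d) Σ_{x ∈ 𝕌_n^d} (⟨w,x⟩ + b)^k conj(χ_j(x)) is 0 if k < |j|, and equals
(k!/(j₁!⋯j_d!)) conj(w₁)^{j₁} ⋯ conj(w_d)^{j_d} if k = |j|. -/
theorem stmt18 (n d : ℕ) (hn : 1 ≤ n) (hd : 1 ≤ d)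
    (w : Fin d → ℂ) (b : ℂ) (j : Fin d → Fin n) (k : ℕ)
    (hk : k ≤ ∑ i, (j i : ℕ)) :
    (1 / (n : ℂ) ^ d) * ∑ x : Fin d → Fin n,
        ((∑ i, (starRingEnd ℂ) (w i) * rootU n (x i)) + b) ^ k *
          (starRingEnd ℂ) (∏ i, rootU n (x i) ^ (j i : ℕ))
      = if k < ∑ i, (j i : ℕ) then 0
        else (Nat.multinomial Finset.univ (fun i => (j i : ℕ)) : ℂ) *
          ∏ i, (starRingEnd ℂ) (w i) ^ (j i : ℕ) := by
  classical
  set u : Fin d → ℂ := fun i => (starRingEnd ℂ) (w i) with hu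
  -- Step 1: expand the power
  have expand : ∀ x : Fin d → Fin n,
      ((∑ i, u i * rootU n (x i)) + b) ^ k *
        (starRingEnd ℂ) (∏ i, rootU n (x i) ^ (j i : ℕ))
      = ∑ m ∈ Finset.range (k+1), ∑ c ∈ Finset.piAntidiag Finset.univ m,
          ((Nat.multinomial Finset.univ c : ℂ) * (∏ i, u i ^ c i) *
            (b ^ (k - m) * (Nat.choose k m : ℂ))) *
          ∏ i, (rootU n (x i) ^ c i * (starRingEnd ℂ) (rootU n (x i) ^ (j i : ℕ))) := by
    intro x
    rw [add_pow, Finset.sum_mul]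
    refine Finset.sum_congr rfl fun m hm => ?_
    rw [Finset.sum_pow_eq_sum_piAntidiag, Finset.sum_mul, Finset.sum_mul, Finset.sum_mul]
    refine Finset.sum_congr rfl fun c hc => ?_
    simp only [mul_pow, Finset.prod_mul_distrib, map_prod]
    ring
  simp_rw [show ∀ i, (starRingEnd ℂ) (w i) = u i from fun i => rfl, expand]
  rw [Finset.sum_comm]
  -- now : ∑ m ∈ range (k+1), ∑ x, ∑ c ...; swap inner
  have swap2 : ∀ m ∈ Finset.range (k+1),
      (∑ x : Fin d → Fin n, ∑ c ∈ Finset.piAntidiag Finset.univ m,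
          ((Nat.multinomial Finset.univ c : ℂ) * (∏ i, u i ^ c i) *
            (b ^ (k - m) * (Nat.choose k m : ℂ))) *
          ∏ i, (rootU n (x i) ^ c i * (starRingEnd ℂ) (rootU n (x i) ^ (j i : ℕ)))) =
      ∑ c ∈ Finset.piAntidiag Finset.univ m,
          ((Nat.multinomial Finset.univ c : ℂ) * (∏ i, u i ^ c i) *
            (b ^ (k - m) * (Nat.choose k m : ℂ))) *
          ∏ i, (if ((n:ℤ) ∣ ((c i : ℤ) - ((j i : ℕ) : ℤ))) then (n : ℂ) else 0) := by
    intro m _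
    rw [Finset.sum_comm]
    refine Finset.sum_congr rfl fun c hc => ?_
    rw [← Finset.mul_sum]
    congr 1
    have : ∀ i : Fin d, (∑ y : Fin n, rootU n y ^ c i * (starRingEnd ℂ) (rootU n y ^ (j i : ℕ)))
        = if ((n:ℤ) ∣ ((c i : ℤ) - ((j i : ℕ) : ℤ))) then (n : ℂ) else 0 :=
      fun i => orth n hn (c i) (j i)
    rw [← Finset.prod_congr rfl fun i _ => this i]
    have h2 := Finset.sum_prod_piFinset (Finset.univ : Finset (Fin n))
      (fun i y => rootU n y ^ c i * (starRingEnd ℂ) (rootU n y ^ (j i : ℕ)))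
    rw [Fintype.piFinset_univ] at h2
    exact h2
  rw [Finset.sum_congr rfl swap2]
  have hn0 : (n : ℂ) ≠ 0 := Nat.cast_ne_zero.2 (by omega)
  have hnd0 : (n : ℂ) ^ d ≠ 0 := pow_ne_zero _ hn0
  -- terms vanish unless m = ∑ j and c = j
  have hzero : ∀ m ∈ Finset.range (k+1), ∀ c ∈ Finset.piAntidiag Finset.univ m,
      ¬(m = ∑ i, (j i : ℕ) ∧ c = fun i => (j i : ℕ)) →
      ((Nat.multinomial Finset.univ c : ℂ) * (∏ i, u i ^ c i) *
        (b ^ (k - m) * (Nat.choose k m : ℂ))) *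
        ∏ i, (if ((n:ℤ) ∣ ((c i : ℤ) - ((j i : ℕ) : ℤ))) then (n : ℂ) else 0) = 0 := by
    intro m hm c hc hne
    by_cases hall : ∀ i, (n:ℤ) ∣ ((c i : ℤ) - ((j i : ℕ) : ℤ))
    · exfalso
      have hge : ∀ i, (j i : ℕ) ≤ c i := by
        intro i
        by_contra hlt
        push_neg at hlt
        have h1 : (0:ℤ) < ((j i : ℕ) : ℤ) - (c i : ℤ) := by
          have : (c i : ℤ) < ((j i : ℕ) : ℤ) := by exact_mod_cast hlt
          omega
        have h2 : (n:ℤ) ∣ (((j i : ℕ) : ℤ) - (c i : ℤ)) := by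
          have h5 := dvd_neg.2 (hall i)
          rwa [neg_sub] at h5
        have h3 := Int.le_of_dvd h1 h2
        have h4 : (j i : ℕ) < n := (j i).isLt
        omega
      have hcsum : ∑ i, c i = m := ((Finset.mem_piAntidiag).1 hc).1
      have hle : (∑ i, (j i : ℕ)) ≤ ∑ i, c i := Finset.sum_le_sum fun i _ => hge i
      have hmk : m ≤ k := by have := Finset.mem_range.1 hm; omega
      have heq : ∑ i, (j i : ℕ) = ∑ i, c i := le_antisymm hle (by omega)
      have hce : ∀ i ∈ Finset.univ, (j i : ℕ) = c i :=
        (Finset.sum_eq_sum_iff_of_le (fun i _ => hge i)).1 heq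
      exact hne ⟨by omega, funext fun i => ((hce i (Finset.mem_univ i)).symm)⟩
    · push_neg at hall
      obtain ⟨i0, hi0⟩ := hall
      have hp : (∏ i, (if ((n:ℤ) ∣ ((c i : ℤ) - ((j i : ℕ) : ℤ))) then (n : ℂ) else 0)) = 0 :=
        Finset.prod_eq_zero (Finset.mem_univ i0) (by simp [hi0])
      rw [hp, mul_zero]
  by_cases hlt : k < ∑ i, (j i : ℕ)
  · rw [if_pos hlt]
    have hz : (∑ m ∈ Finset.range (k+1), ∑ c ∈ Finset.piAntidiag Finset.univ m,
        ((Nat.multinomial Finset.univ c : ℂ) * (∏ i, u i ^ c i) *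
          (b ^ (k - m) * (Nat.choose k m : ℂ))) *
          ∏ i, (if ((n:ℤ) ∣ ((c i : ℤ) - ((j i : ℕ) : ℤ))) then (n : ℂ) else 0)) = 0 := by
      refine Finset.sum_eq_zero fun m hm => Finset.sum_eq_zero fun c hc => ?_
      refine hzero m hm c hc ?_
      rintro ⟨h1, -⟩
      have := Finset.mem_range.1 hm
      omega
    rw [hz, mul_zero]
  · have hke : k = ∑ i, (j i : ℕ) := le_antisymm hk (not_lt.1 hlt)
    rw [if_neg hlt]
    have hJmem : (fun i => (j i : ℕ)) ∈ Finset.piAntidiag (Finset.univ : Finset (Fin d)) k := by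
      rw [Finset.mem_piAntidiag]
      exact ⟨hke.symm, fun i _ => Finset.mem_univ i⟩
    rw [Finset.sum_eq_single_of_mem k (Finset.self_mem_range_succ k)
      (fun m hm hmne => Finset.sum_eq_zero fun c hc =>
        hzero m hm c hc (by rintro ⟨h1, -⟩; omega))]
    rw [Finset.sum_eq_single_of_mem _ hJmem
      (fun c hc hcne => hzero k (Finset.self_mem_range_succ k) c hc (by rintro ⟨-, h2⟩; exact hcne h2))]
    have hprod : (∏ i : Fin d, (if ((n:ℤ) ∣ ((((j i : ℕ)) : ℤ) - ((j i : ℕ) : ℤ))) then (n : ℂ) else 0))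
        = (n : ℂ) ^ d := by
      simp
    rw [hprod]
    rw [Nat.sub_self, pow_zero, Nat.choose_self, Nat.cast_one, mul_one]
    field_simp
end
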